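/- arXiv:2307.11367 — 12 statements merged into one kernel-verified Lean document; each statement's English description precedes it below -/
import Mathlib

section
/- Let R be a commutative ring. If the total ring of quotients T(R) is a semisimple ring, then R is reduced and has only finitely many minimal prime ideals. -/
theorem aux_isReduced_of_semisimple (T : Type*) [CommRing T] [IsSemisimpleRing T] :
    IsReduced T := by
  have h : (⊥ : Ideal T).IsRadical := by
    have := IsSemisimpleModule.annihilator_isRadical (M := T) T
    have he : Module.annihilator T T = ⊥ :=
      le_antisymm (fun x hx => by simpa using Module.mem_annihilator.mp hx 1) bot_le
    rwa [he] at this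
  constructor
  intro x hx
  have : x ∈ (⊥ : Ideal T).radical := hx
  simpa using h this

/-- If the total ring of quotients of a commutative ring `R` is semisimple,
then `R` is reduced and has finitely many minimal primes. -/
theorem stmt1 (R : Type*) [CommRing R]
    (h : IsSemisimpleRing (FractionRing R)) :
    IsReduced R ∧ (minimalPrimes R).Finite := by
  set T := FractionRing R
  have : IsSemisimpleRing T := h
  have hTred : IsReduced T := aux_isReduced_of_semisimple T
  have hinj : Function.Injective (algebraMap R T) := IsFractionRing.injective R T
  constructor
  · exact isReduced_of_injective (algebraMap R T) hinj
  · have hfin : (minimalPrimes T).Finite := minimalPrimes.finite_of_isNoetherianRing T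
    refine (hfin.image (Ideal.comap (algebraMap R T))).subset ?_
    intro p hp
    have hp' : p ∈ ((⊥ : Ideal T).comap (algebraMap R T)).minimalPrimes := by
      have : (⊥ : Ideal T).comap (algebraMap R T) = ⊥ := by
        rw [← RingHom.ker_eq_comap_bot, RingHom.ker_eq_bot_iff_eq_zero]
        intro x hx; exact hinj (by simpa using hx)
      rw [this]; exact hp
    obtain ⟨q, hq, hq'⟩ := Ideal.exists_minimalPrimes_comap_eq (algebraMap R T) p hp'
    exact ⟨q, hq, hq'⟩
end

section
/- Let R be a commutative ring whose total ring of quotients T(R) is semisimple. Then T(R) is injective as an R-module. -/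
/-- If the total ring of quotients of `R` is semisimple, then `T(R)` is injective
as an `R`-module (in the sense of the Baer criterion: every `R`-linear map from an
ideal of `R` extends to `R`). -/
theorem stmt3 (R : Type*) [CommRing R]
    (h : IsSemisimpleRing (FractionRing R)) :
    Module.Baer R (FractionRing R) := by
  classical
  set T := FractionRing R
  set S := nonZeroDivisors R
  intro I f
  have hu : ∀ x : S, IsUnit ((algebraMap R (Module.End R T)) x) := by
    intro x
    rw [Module.End.isUnit_iff]
    have hx : IsUnit (algebraMap R T x) := IsLocalization.map_units T x
    constructor
    · intro a b hab
      simp only [Module.algebraMap_end_apply, Algebra.smul_def] at hab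
      exact hx.mul_right_injective hab
    · intro a
      exact ⟨hx.unit⁻¹ * a, by simp [Module.algebraMap_end_apply, Algebra.smul_def, ← mul_assoc]⟩
  set J : Ideal T := I.map (algebraMap R T) with hJ
  let ι : I →ₗ[R] J := Algebra.idealMap I (S := T)
  let F : J →ₗ[R] T := IsLocalizedModule.lift S ι f hu
  have hF : ∀ a : I, F (ι a) = f a := fun a => IsLocalizedModule.lift_apply S ι f hu a
  let F' : J →ₗ[T] T := F.extendScalarsOfIsLocalization S T
  obtain ⟨J', hc⟩ := exists_isCompl (J : Submodule T T)
  let π : T →ₗ[T] J := Submodule.linearProjOfIsCompl J J' hc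
  let φ : T →ₗ[T] T := F' ∘ₗ π
  refine ⟨(φ.restrictScalars R) ∘ₗ Algebra.linearMap R T, ?_⟩
  intro x hx
  have h1 : (ι ⟨x, hx⟩ : T) = algebraMap R T x := rfl
  have h2 : π (algebraMap R T x) = ι ⟨x, hx⟩ := by
    rw [← h1]
    exact Submodule.linearProjOfIsCompl_apply_left hc (ι ⟨x, hx⟩)
  simp only [LinearMap.comp_apply, LinearMap.restrictScalars_apply, Algebra.linearMap_apply,
    φ, h2]
  show F (ι ⟨x, hx⟩) = f ⟨x, hx⟩
  exact hF ⟨x, hx⟩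
end

section
/- Let R be a commutative ring and let I be a regular ideal of R (i.e., I contains a non-zero-divisor). Then Ext^1_R(R/I, T(R)) = 0, where T(R) is the total ring of quotients of R. -/
open CategoryTheory

universe u

/-- `Ext^n_R(M, N)` via the derived functor `Ext` on `ModuleCat R`. -/
abbrev extGroup (R : Type u) [CommRing R] (n : ℕ) (M N : Type u)
    [AddCommGroup M] [Module R M] [AddCommGroup N] [Module R N] : Type u :=
  ((Ext R (ModuleCat.{u} R) n).obj (Opposite.op (ModuleCat.of R M))).obj (ModuleCat.of R N)


open CategoryTheory Limits

noncomputable section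

namespace MyAux

variable {C : Type*} [Category C] [Abelian C] [EnoughProjectives C]

/-- Variant of `ProjectiveResolution.ofComplex` starting from a chosen epimorphism
from a projective object. -/
def ofEpiComplex {Z P : C} (π : P ⟶ Z) [Projective P] [Epi π] : ChainComplex C ℕ :=
  ChainComplex.mk' P (Projective.syzygies π) (Projective.d π)
    (fun f => ⟨_, Projective.d f, by erw [Category.assoc, kernel.condition, comp_zero]⟩)

lemma ofEpiComplex_d_1_0 {Z P : C} (π : P ⟶ Z) [Projective P] [Epi π] :
    (ofEpiComplex π).d 1 0 = Projective.d π := by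
  simp [ofEpiComplex]

lemma ofEpiComplex_d_2_1 {Z P : C} (π : P ⟶ Z) [Projective P] [Epi π] :
    (ofEpiComplex π).d 2 1 = Projective.d (Projective.d π) := by
  simp [ofEpiComplex, ChainComplex.mk']

lemma mk'_exact_aux (X₀ X₁ : C) (d₀ : X₁ ⟶ X₀)
    (succ' : ∀ {X₀ X₁ : C} (f : X₁ ⟶ X₀), Σ' (X₂ : C) (d : X₂ ⟶ X₁), d ≫ f = 0) (n : ℕ)
    (h : (ShortComplex.mk (succ' ((ChainComplex.mk' X₀ X₁ d₀ succ').d (n + 1) n)).2.1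
      ((ChainComplex.mk' X₀ X₁ d₀ succ').d (n + 1) n) (succ' _).2.2).Exact) :
    (ShortComplex.mk ((ChainComplex.mk' X₀ X₁ d₀ succ').d (n + 2) (n + 1))
      ((ChainComplex.mk' X₀ X₁ d₀ succ').d (n + 1) n)
      ((ChainComplex.mk' X₀ X₁ d₀ succ').d_comp_d _ _ _)).Exact := by
  exact (ShortComplex.exact_iff_of_iso (ShortComplex.isoMk
    (S₁ := ShortComplex.mk ((ChainComplex.mk' X₀ X₁ d₀ succ').d (n + 2) (n + 1))
      ((ChainComplex.mk' X₀ X₁ d₀ succ').d (n + 1) n) ((ChainComplex.mk' X₀ X₁ d₀ succ').d_comp_d _ _ _))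
    (S₂ := ShortComplex.mk (succ' ((ChainComplex.mk' X₀ X₁ d₀ succ').d (n + 1) n)).2.1
      ((ChainComplex.mk' X₀ X₁ d₀ succ').d (n + 1) n) (succ' _).2.2) (ChainComplex.mk'XIso X₀ X₁ d₀ succ' n)
    (Iso.refl ((ChainComplex.mk' X₀ X₁ d₀ succ').X (n + 1))) (Iso.refl ((ChainComplex.mk' X₀ X₁ d₀ succ').X n))
    ((ChainComplex.mk'_d X₀ X₁ d₀ succ' n).symm.trans (Category.comp_id _).symm)
    ((Category.id_comp _).trans
      (Category.comp_id ((ChainComplex.mk' X₀ X₁ d₀ succ').d (n + 1) n)).symm))).2 h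

lemma ofEpiComplex_exactAt_succ {Z P : C} (π : P ⟶ Z) [Projective P] [Epi π] (n : ℕ) :
    (ofEpiComplex π).ExactAt (n + 1) := by
  rw [HomologicalComplex.exactAt_iff' _ (n + 2) (n + 1) n (by simp) (by simp)]
  exact mk'_exact_aux _ _ _ _ n (exact_d_f _)

instance ofEpiComplex_projective {Z P : C} (π : P ⟶ Z) [Projective P] [Epi π] (n : ℕ) :
    Projective ((ofEpiComplex π).X n) := by
  obtain (_ | _ | _ | n) := n
  · exact ‹Projective P›
  all_goals apply Projective.projective_over

/-- Variant of `ProjectiveResolution.of` starting from a chosen epimorphism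
from a projective object. -/
def ofEpi {Z P : C} (π : P ⟶ Z) [Projective P] [Epi π] : ProjectiveResolution Z where
  complex := ofEpiComplex π
  π := (ChainComplex.toSingle₀Equiv _ _).symm ⟨π, by
          erw [ofEpiComplex_d_1_0, Category.assoc, kernel.condition, comp_zero]⟩
  quasiIso := ⟨fun n => by
    cases n
    · rw [ChainComplex.quasiIsoAt₀_iff, ShortComplex.quasiIso_iff_of_zeros']
      · refine (ShortComplex.exact_and_epi_g_iff_of_iso ?_).2
          ⟨exact_d_f π, by dsimp; infer_instance⟩
        exact ShortComplex.isoMk (Iso.refl _) (Iso.refl _) (Iso.refl _)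
          (by erw [Category.id_comp, Category.comp_id]; exact (ofEpiComplex_d_1_0 π).symm)
          (by erw [Category.id_comp, Category.comp_id]
              exact (ChainComplex.toSingle₀Equiv_symm_apply_f_zero (C := ofEpiComplex π) π _).symm)
      all_goals rfl
    · rw [quasiIsoAt_iff_exactAt']
      · apply ofEpiComplex_exactAt_succ
      · apply ChainComplex.exactAt_succ_single_obj⟩

end MyAux

namespace MyAux

open Abelian in
lemma subsingleton_ext_one (R : Type*) [CommRing R] {C : Type*} [Category C] [Abelian C]
    [Linear R C] [EnoughProjectives C] {Z P : C} (π : P ⟶ Z) [Projective P] [Epi π] (N : C)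
    (hext : ∀ g : (kernel π : C) ⟶ N, ∃ h : P ⟶ N, kernel.ι π ≫ h = g) :
    Subsingleton (((Ext R C 1).obj (Opposite.op Z)).obj N) := by
  have hz : IsZero (((ofEpi π).complex.linearYonedaObj R N).homology 1) := by
    rw [← HomologicalComplex.exactAt_iff_isZero_homology]
    rw [HomologicalComplex.exactAt_iff' _ 0 1 2 (by simp) (by simp)]
    rw [ShortComplex.moduleCat_exact_iff]
    intro g hg
    have hg' : (ofEpiComplex π).d 2 1 ≫ g = 0 := by
      simp [HomologicalComplex.sc', HomologicalComplex.shortComplexFunctor',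
        ChainComplex.linearYonedaObj_d, ofEpi, ModuleCat.hom_ofHom, Linear.leftComp_apply] at hg
      exact hg
    rw [ofEpiComplex_d_2_1] at hg'
    have h1 : kernel.ι (Projective.d π) ≫ g = 0 := by
      have : Projective.d (Projective.d π)
          = Projective.π (kernel (Projective.d π)) ≫ kernel.ι (Projective.d π) := rfl
      erw [this, Category.assoc] at hg'
      exact (cancel_epi (Projective.π (kernel (Projective.d π)))).1 (by rw [comp_zero]; exact hg')
    have h2 : kernel.ι (Projective.π (kernel π) : Projective.syzygies π ⟶ kernel π) ≫ g = 0 := by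
      have hι : kernel.ι (Projective.π (kernel π) : Projective.syzygies π ⟶ kernel π)
          = (kernelCompMono (Projective.π (kernel π)) (kernel.ι π)).inv ≫
            kernel.ι (Projective.d π) := by
        simp [kernelCompMono]
        erw [kernel.lift_ι]
      erw [hι, Category.assoc, h1, comp_zero]
    obtain ⟨h, hh⟩ := hext (epiDesc (Projective.π (kernel π)) g h2)
    refine ⟨h, ?_⟩
    show ((ofEpi π).complex.linearYonedaObj R N).d 0 1 h = g
    have : (ofEpiComplex π).d 1 0 ≫ h = g := by
      erw [ofEpiComplex_d_1_0,
        show Projective.d π = Projective.π (kernel π) ≫ kernel.ι π from rfl,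
        Category.assoc, hh, comp_epiDesc]
    simp [ChainComplex.linearYonedaObj_d, ofEpi, ModuleCat.hom_ofHom, Linear.leftComp_apply]
    exact this
  have hz' : IsZero (((Ext R C 1).obj (Opposite.op Z)).obj N) :=
    hz.of_iso ((ofEpi π).isoExt 1 N)
  have h0 : (𝟙 (((Ext R C 1).obj (Opposite.op Z)).obj N)) = 0 := hz'.eq_of_src _ _
  have hx : ∀ x : (((Ext R C 1).obj (Opposite.op Z)).obj N), x = 0 := fun x => by
    calc x = (𝟙 (((Ext R C 1).obj (Opposite.op Z)).obj N)) x := rfl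
    _ = (0 : ((Ext R C 1).obj (Opposite.op Z)).obj N ⟶ _) x := by rw [h0]
    _ = 0 := LinearMap.zero_apply x
  exact ⟨fun a b => by rw [hx a, hx b]⟩

end MyAux

namespace MyAux

/-- Extension of maps from a regular ideal to the fraction ring. -/
lemma extend_to_fractionRing {R : Type*} [CommRing R] (J : Submodule R R)
    (hJ : ∃ r ∈ J, r ∈ nonZeroDivisors R) (f : J →ₗ[R] FractionRing R) :
    ∃ g : R →ₗ[R] FractionRing R, ∀ x (hx : x ∈ J), g x = f ⟨x, hx⟩ := by
  obtain ⟨r, hrJ, hr⟩ := hJ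
  set K := FractionRing R
  have hu : IsUnit (algebraMap R K r) := IsLocalization.map_units K ⟨r, hr⟩
  set v := hu.unit with hv
  refine ⟨LinearMap.toSpanSingleton R K (((v⁻¹ : Kˣ) : K) * f ⟨r, hrJ⟩), fun x hx => ?_⟩
  have key : r • f ⟨x, hx⟩ = x • f ⟨r, hrJ⟩ := by
    rw [← f.map_smul, ← f.map_smul]
    congr 1
    exact Subtype.ext (mul_comm r x)
  have hvr : (v : K) = algebraMap R K r := rfl
  calc LinearMap.toSpanSingleton R K (((v⁻¹ : Kˣ) : K) * f ⟨r, hrJ⟩) x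
      = x • (((v⁻¹ : Kˣ) : K) * f ⟨r, hrJ⟩) := rfl
    _ = ((v⁻¹ : Kˣ) : K) * (x • f ⟨r, hrJ⟩) := (mul_smul_comm x _ _).symm
    _ = ((v⁻¹ : Kˣ) : K) * (r • f ⟨x, hx⟩) := by rw [← key]
    _ = ((v⁻¹ : Kˣ) : K) * ((v : K) * f ⟨x, hx⟩) := by rw [Algebra.smul_def, hvr]
    _ = f ⟨x, hx⟩ := by rw [← mul_assoc, Units.inv_mul, one_mul]

end MyAux


/-- If `I` is a regular ideal of `R` (it contains a non-zero-divisor), then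
`Ext^1_R(R/I, T(R)) = 0`. -/
theorem stmt4 (R : Type u) [CommRing R] (I : Ideal R)
    (hI : ∃ r ∈ I, r ∈ nonZeroDivisors R) :
    Subsingleton (extGroup R 1 (R ⧸ I) (FractionRing R)) := by
  let P : ModuleCat.{u} R := ModuleCat.of R R
  let Z : ModuleCat.{u} R := ModuleCat.of R (R ⧸ I)
  let π : P ⟶ Z := ModuleCat.ofHom I.mkQ
  haveI : Projective P := (IsProjective.iff_projective.{u,u} R).mp inferInstance
  haveI : Epi π := (ModuleCat.epi_iff_surjective π).mpr (Submodule.mkQ_surjective I)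
  refine MyAux.subsingleton_ext_one R π (ModuleCat.of R (FractionRing R)) ?_
  intro g
  let J : Submodule R R := LinearMap.ker π.hom
  have hJI : J = I := Submodule.ker_mkQ I
  let e : kernel π ≅ ModuleCat.of R J := ModuleCat.kernelIsoKer π
  obtain ⟨h₀, hh₀⟩ := MyAux.extend_to_fractionRing J (hJI ▸ hI)
    (e.inv ≫ g : ModuleCat.of R J ⟶ ModuleCat.of R (FractionRing R)).hom
  refine ⟨ModuleCat.ofHom h₀, ?_⟩
  have hsub : (ModuleCat.ofHom J.subtype : ModuleCat.of R J ⟶ P) ≫ ModuleCat.ofHom h₀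
      = e.inv ≫ g := by
    ext x
    exact hh₀ x.1 x.2
  have hk : e.hom ≫ (ModuleCat.ofHom J.subtype : ModuleCat.of R J ⟶ P) = kernel.ι π :=
    ModuleCat.kernelIsoKer_hom_ker_subtype π
  rw [← hk, Category.assoc, hsub, e.hom_inv_id_assoc]
end
end

section
/- Let R be a commutative ring that is reduced with minimal primes p_1, ..., p_n. Then the total ring of quotients T(R) is isomorphic as a ring to the product of the localizations R_{p_1} × ... × R_{p_n}, and each R_{p_i} is a field. -/
universe u

section Aux
variable {R : Type u} [CommRing R] [IsReduced R]

lemma aux_field (q : Ideal R) [q.IsPrime] (hq : q ∈ minimalPrimes R) :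
    IsField (Localization q.primeCompl) := by
  rw [IsLocalRing.isField_iff_maximalIdeal_eq, eq_bot_iff]
  intro x hx
  haveI := Ring.KrullDimLE.of_isLocalization q hq (Localization q.primeCompl)
  have := (Ring.KrullDimLE.isNilpotent_iff_mem_maximalIdeal).mpr hx
  simpa using IsReduced.eq_zero x this

lemma aux_map_zero (q : Ideal R) [q.IsPrime] (hq : q ∈ minimalPrimes R)
    {x : R} (hx : x ∈ q) : (algebraMap R (Localization q.primeCompl)) x = 0 := by
  by_contra hne
  obtain ⟨y, hy⟩ := (aux_field q hq).mul_inv_cancel hne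
  exact (IsLocalization.AtPrime.isUnit_to_map_iff (Localization q.primeCompl) q x).mp
    (IsUnit.of_mul_eq_one _ hy) hx

lemma aux_nzd {n : ℕ} (p : Fin n → Ideal R) (hp : ∀ i, (p i).IsPrime)
    (hrange : Set.range p = minimalPrimes R) {x : R} (hx : ∀ i, x ∉ p i) :
    x ∈ nonZeroDivisors R := by
  rw [mem_nonZeroDivisors_iff_right]
  intro z hz
  have hzn : IsNilpotent z := by
    rw [nilpotent_iff_mem_prime]
    intro q hq
    obtain ⟨q', hq', hle⟩ := Ideal.exists_minimalPrimes_le (bot_le : (⊥ : Ideal R) ≤ q)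
    have hq'min : q' ∈ minimalPrimes R := hq'
    obtain ⟨i, rfl⟩ : ∃ i, p i = q' := by rw [← Set.mem_range, hrange]; exact hq'min
    have : z * x ∈ p i := hz ▸ (p i).zero_mem
    rcases (hp i).mem_or_mem this with h | h
    · exact hle h
    · exact absurd h (hx i)
  exact IsReduced.eq_zero z hzn

end Aux

/-- If `R` is a reduced commutative ring with minimal primes `p 0, …, p (n-1)`,
then `T(R) ≅ R_{p 0} × ⋯ × R_{p (n-1)}` as rings and each `R_{p i}` is a field. -/
theorem stmt5 (R : Type u) [CommRing R] [IsReduced R] (n : ℕ) (p : Fin n → Ideal R)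
    (hp : ∀ i, (p i).IsPrime) (hinj : Function.Injective p)
    (hrange : Set.range p = minimalPrimes R) :
    Nonempty (FractionRing R ≃+* ∀ i, Localization (@Ideal.primeCompl R _ (p i) (hp i))) ∧
      ∀ i, IsField (Localization (@Ideal.primeCompl R _ (p i) (hp i))) := by
  haveI := hp
  have hpmin : ∀ i, p i ∈ minimalPrimes R := fun i => hrange ▸ Set.mem_range_self i
  refine ⟨?_, fun i => aux_field (p i) (hpmin i)⟩
  set A : Fin n → Type u := fun i => Localization (p i).primeCompl with hA
  letI : ∀ i, CommRing (A i) := fun i => inferInstanceAs (CommRing (Localization (p i).primeCompl))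
  letI : ∀ i, Algebra R (A i) := fun i =>
    inferInstanceAs (Algebra R (Localization (p i).primeCompl))
  -- elements d i j ∈ p j \ p i for i ≠ j
  have hd : ∀ i j : Fin n, ∃ x : R, i ≠ j → x ∈ p j ∧ x ∉ p i := by
    intro i j
    by_cases hij : i = j
    · exact ⟨1, fun h => absurd hij h⟩
    by_contra h
    push_neg at h
    have hle : p j ≤ p i := fun x hx => (h x).2 hx
    have hm := hpmin i
    rw [minimalPrimes_eq_minimals, Set.mem_setOf] at hm
    exact hij (hinj (hm.eq_of_le (hp j) hle)).symm
  choose d hd using hd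
  set c : Fin n → R := fun i => ∏ j ∈ Finset.univ.erase i, d i j with hc
  have hc_not : ∀ i, c i ∉ p i := by
    intro i hmem
    have : (∏ j ∈ Finset.univ.erase i, d i j) ∈ p i := hmem
    obtain ⟨j, hj, hmemj⟩ := (Ideal.IsPrime.prod_mem_iff).mp this
    exact (hd i j (Finset.ne_of_mem_erase hj).symm).2 hmemj
  have hc_mem : ∀ i j, j ≠ i → c i ∈ p j := by
    intro i j hji
    have hj : j ∈ Finset.univ.erase i := Finset.mem_erase.mpr ⟨hji, Finset.mem_univ j⟩
    show (∏ k ∈ Finset.univ.erase i, d i k) ∈ p j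
    rw [← Finset.mul_prod_erase _ _ hj]
    exact Ideal.mul_mem_right _ _ (hd i j hji.symm).1
  have key : ∀ t : Fin n → R, (∀ i, t i ∉ p i) → (∑ i, c i * t i) ∈ nonZeroDivisors R := by
    intro t ht
    refine aux_nzd p hp hrange fun j hmem => ?_
    have hrest : (∑ i ∈ Finset.univ.erase j, c i * t i) ∈ p j :=
      Ideal.sum_mem _ fun k hk =>
        Ideal.mul_mem_right _ _ (hc_mem k j (Finset.ne_of_mem_erase hk).symm)
    have hcj : c j * t j ∈ p j := by
      have heq := Finset.add_sum_erase Finset.univ (fun i => c i * t i) (Finset.mem_univ j)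
      have h2 : c j * t j = (∑ i, c i * t i) - ∑ i ∈ Finset.univ.erase j, c i * t i := by
        rw [← heq]; ring
      rw [h2]; exact Ideal.sub_mem _ hmem hrest
    rcases (hp j).mem_or_mem hcj with h | h
    · exact hc_not j h
    · exact ht j h
  have hmapzero : ∀ (i j : Fin n), j ≠ i → ∀ x : R, (algebraMap R (A i)) (c j * x) = 0 := by
    intro i j hji x
    rw [map_mul]
    have : (algebraMap R (A i)) (c j) = 0 := aux_map_zero (p i) (hpmin i) (hc_mem j i hji.symm)
    rw [this, zero_mul]
  letI : IsLocalization (nonZeroDivisors R) (∀ i, A i) := by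
    refine ⟨⟨?_, ?_, ?_⟩⟩
    · -- map_units
      rintro ⟨s, hs⟩
      have hu : ∀ i, IsUnit ((algebraMap R (A i)) s) := by
        intro i
        have hsi : s ∈ (p i).primeCompl := by
          intro hmem
          obtain ⟨t, ht⟩ := (IsLocalization.map_eq_zero_iff (p i).primeCompl
            (Localization (p i).primeCompl) s).mp (aux_map_zero (p i) (hpmin i) hmem)
          have ht0 : (t : R) = 0 := (mem_nonZeroDivisors_iff_right.mp hs) t ht
          exact t.2 (ht0 ▸ (p i).zero_mem)
        exact IsLocalization.map_units (Localization (p i).primeCompl) ⟨s, hsi⟩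
      choose v hv using fun i => (hu i).exists_right_inv
      refine IsUnit.of_mul_eq_one (fun i => v i) ?_
      funext i
      exact hv i
    · -- surj
      intro z
      have hzi : ∀ i, ∃ (a : R) (s : (p i).primeCompl), IsLocalization.mk' (A i) a s = z i :=
        fun i => by
          obtain ⟨⟨a, s⟩, h⟩ := IsLocalization.mk'_surjective (p i).primeCompl (z i)
          exact ⟨a, s, h⟩
      choose a s hs using hzi
      have hs' : ∀ i, (s i : R) ∉ p i := fun i => (s i).2
      refine ⟨⟨∑ i, c i * a i, ⟨∑ i, c i * (s i : R), key _ hs'⟩⟩, ?_⟩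
      funext i
      show z i * (algebraMap R (A i)) (∑ j, c j * (s j : R)) =
        (algebraMap R (A i)) (∑ j, c j * a j)
      have h1 : (algebraMap R (A i)) (∑ j, c j * (s j : R)) =
          (algebraMap R (A i)) (c i) * (algebraMap R (A i)) ((s i : R)) := by
        rw [map_sum, Finset.sum_eq_single i]
        · rw [map_mul]
        · intro j _ hne; exact hmapzero i j hne _
        · intro h; exact absurd (Finset.mem_univ i) h
      have h2 : (algebraMap R (A i)) (∑ j, c j * a j) =
          (algebraMap R (A i)) (c i) * (algebraMap R (A i)) (a i) := by
        rw [map_sum, Finset.sum_eq_single i]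
        · rw [map_mul]
        · intro j _ hne; exact hmapzero i j hne _
        · intro h; exact absurd (Finset.mem_univ i) h
      have h3 : z i * (algebraMap R (A i)) ((s i : R)) = (algebraMap R (A i)) (a i) := by
        rw [← hs i]
        exact IsLocalization.mk'_spec _ _ _
      rw [h1, h2, ← h3]
      ring
    · -- exists_of_eq
      intro x y hxy
      have hi : ∀ i, ∃ t : (p i).primeCompl, (t : R) * x = (t : R) * y := by
        intro i
        have hcf := congrFun hxy i
        exact (IsLocalization.eq_iff_exists (p i).primeCompl (A i)).mp hcf
      choose t ht using hi
      have ht' : ∀ i, (t i : R) ∉ p i := fun i => (t i).2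
      refine ⟨⟨∑ i, c i * (t i : R), key _ ht'⟩, ?_⟩
      show (∑ i, c i * (t i : R)) * x = (∑ i, c i * (t i : R)) * y
      rw [Finset.sum_mul, Finset.sum_mul]
      apply Finset.sum_congr rfl
      intro i _
      rw [mul_assoc, mul_assoc, ht i]
  exact ⟨(IsLocalization.algEquiv (nonZeroDivisors R) (FractionRing R) (∀ i, A i)).toRingEquiv⟩
end

section
/- Let R be a commutative reduced ring with finitely many minimal primes, and suppose R does not contain a field as a direct summand (as a ring). Then no nonzero direct summand of the R-module T(R) is finitely generated over R. -/
universe u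

def ContainsFieldSummand (R : Type u) [CommRing R] : Prop :=
  ∃ (K S : Type u), ∃ (_ : CommRing K) (_ : CommRing S),
    IsField K ∧ Nonempty (R ≃+* K × S)

/-- Associativity of ring products as a ring equivalence. -/
def ringProdAssoc (A B C : Type*) [NonUnitalNonAssocSemiring A] [NonUnitalNonAssocSemiring B]
    [NonUnitalNonAssocSemiring C] : (A × B) × C ≃+* A × B × C :=
  { Equiv.prodAssoc A B C with
    map_mul' := fun _ _ => rfl
    map_add' := fun _ _ => rfl }

/-- A nontrivial reduced commutative ring with finitely many minimal primes in which every
non-zero-divisor is a unit has a field as a ring direct summand. -/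
lemma containsFieldSummand_of_total (K : Type u) [CommRing K] [Nontrivial K] [IsReduced K]
    (hfin : (minimalPrimes K).Finite)
    (hu : ∀ x ∈ nonZeroDivisors K, IsUnit x) : ContainsFieldSummand K := by
  classical
  obtain ⟨m, hm⟩ := Ideal.exists_maximal K
  obtain ⟨p, hp, hpm⟩ := Ideal.exists_minimalPrimes_le (bot_le : (⊥ : Ideal K) ≤ m)
  set P : Finset (Ideal K) := hfin.toFinset with hP
  have hPmem : ∀ q, q ∈ P ↔ q ∈ minimalPrimes K := fun q => hfin.mem_toFinset
  have hsInf0 : sInf (minimalPrimes K) = ⊥ := by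
    have h1 : sInf (minimalPrimes K) = (⊥ : Ideal K).radical := Ideal.sInf_minimalPrimes
    have h2 := nilradical_eq_zero K
    rw [nilradical] at h2
    rw [h1]
    simpa using h2
  have hpmax : p.IsMaximal := by
    have hsub : (m : Set K) ⊆ ⋃ q ∈ (↑P : Set (Ideal K)), (q : Set K) := by
      intro x hx
      have hxnu : ¬IsUnit x := fun h => hm.ne_top (m.eq_top_of_isUnit_mem hx h)
      have hxz : x ∉ nonZeroDivisors K := fun h => hxnu (hu x h)
      rw [mem_nonZeroDivisors_iff_right] at hxz
      push_neg at hxz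
      obtain ⟨z, hzx, hz⟩ := hxz
      have hzmem : z ∉ sInf (minimalPrimes K) := by
        rw [hsInf0]; simpa using hz
      rw [Ideal.mem_sInf] at hzmem
      push_neg at hzmem
      obtain ⟨q, hq, hzq⟩ := hzmem
      have hq' : q.IsPrime := hq.1.1
      have hxq : x ∈ q := by
        rcases hq'.mem_or_mem (show z * x ∈ q by rw [hzx]; exact q.zero_mem) with h | h
        · exact absurd h hzq
        · exact h
      exact Set.mem_biUnion ((hPmem q).mpr hq) hxq
    obtain ⟨q, hqP, hmq⟩ :=
      (Ideal.subset_union_prime p p (fun q hq _ _ => ((hPmem q).mp hq).1.1)).mp hsub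
    have hq := (hPmem q).mp hqP
    have hqp : q ≤ p := hq.2 ⟨hp.1.1, bot_le⟩ (hpm.trans hmq)
    have hpm' : p = m := le_antisymm hpm (hmq.trans hqp)
    rwa [hpm']
  have hpP : p ∈ P := (hPmem p).mpr hp
  set J : Ideal K := (P.erase p).inf id with hJ
  have hJp : ¬J ≤ p := by
    intro h
    obtain ⟨q, hq, hqp⟩ := (Ideal.IsPrime.inf_le' hp.1.1).mp h
    have : p ≤ q := hp.2 ⟨((hPmem q).mp (Finset.mem_of_mem_erase hq)).1.1, bot_le⟩ hqp
    exact (Finset.mem_erase.mp hq).1 (le_antisymm hqp this)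
  have hsup : p ⊔ J = ⊤ := by
    refine hpmax.1.2 _ (lt_of_le_of_ne le_sup_left ?_)
    intro hh
    exact hJp (hh ▸ le_sup_right)
  have hcop : IsCoprime p J := by
    rw [Ideal.isCoprime_iff_sup_eq]; exact hsup
  have hinf : p ⊓ J = ⊥ := by
    have h1 : p ⊓ J = P.inf id := by
      conv_rhs => rw [← Finset.insert_erase hpP]
      rw [Finset.inf_insert]; rfl
    rw [h1, Finset.inf_id_eq_sInf, hfin.coe_toFinset, hsInf0]
  have equiv : K ≃+* (K ⧸ p) × (K ⧸ J) :=
    (RingEquiv.quotientBot K).symm.trans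
      ((Ideal.quotEquivOfEq hinf.symm).trans (Ideal.quotientInfEquivQuotientProd p J hcop))
  exact ⟨K ⧸ p, K ⧸ J, inferInstance, inferInstance,
    (Ideal.Quotient.maximal_ideal_iff_isField_quotient p).mp hpmax, ⟨equiv⟩⟩
/-- Let `R` be a reduced commutative ring with finitely many minimal primes not
containing a field as a ring direct summand. Then no nonzero direct summand of
the `R`-module `T(R)` is finitely generated. -/
theorem stmt6 (R : Type u) [CommRing R] [IsReduced R]
    (hfin : (minimalPrimes R).Finite) (hns : ¬ ContainsFieldSummand R) :
    ∀ N : Submodule R (FractionRing R), N ≠ ⊥ → (∃ N', IsCompl N N') → ¬ N.FG := by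
  intro N hN hex hFG
  obtain ⟨N', hcompl⟩ := hex
  classical
  have hf : Function.Injective (algebraMap R (FractionRing R)) := IsFractionRing.injective R (FractionRing R)
  -- the projection onto N
  set π : (FractionRing R) →ₗ[R] (FractionRing R) := N.subtype.comp (Submodule.linearProjOfIsCompl N N' hcompl) with hπdef
  have hπN : ∀ x : (FractionRing R), π x ∈ N := fun x => (Submodule.linearProjOfIsCompl N N' hcompl x).2
  have hπid : ∀ n ∈ N, π n = n := by
    intro n hn
    have := Submodule.linearProjOfIsCompl_apply_left hcompl ⟨n, hn⟩
    exact congrArg Subtype.val this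
  set e : (FractionRing R) := π 1 with he
  -- R-linearity over elements of R
  have hsm : ∀ (a : R) (z : (FractionRing R)), π (algebraMap R (FractionRing R) a * z) = algebraMap R (FractionRing R) a * π z := by
    intro a z
    have h1 : algebraMap R (FractionRing R) a * z = a • z := (Algebra.smul_def _ _).symm
    have h2 : algebraMap R (FractionRing R) a * π z = a • π z := (Algebra.smul_def _ _).symm
    rw [h1, h2, map_smul]
  -- π is multiplication by e
  have hmul : ∀ x y : (FractionRing R), π (x * y) = x * π y := by
    intro x y
    obtain ⟨⟨r, s⟩, hx⟩ := IsLocalization.surj (nonZeroDivisors R) x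
    have hs : IsUnit (algebraMap R (FractionRing R) (s : R)) := IsLocalization.map_units (FractionRing R) s
    apply hs.mul_left_cancel
    calc algebraMap R (FractionRing R) (s : R) * π (x * y)
        = π (algebraMap R (FractionRing R) (s : R) * (x * y)) := (hsm _ _).symm
      _ = π (algebraMap R (FractionRing R) r * y) := by
          rw [show algebraMap R (FractionRing R) (s : R) * (x * y) = (x * algebraMap R (FractionRing R) (s : R)) * y by ring, hx]
      _ = algebraMap R (FractionRing R) r * π y := hsm _ _
      _ = algebraMap R (FractionRing R) (s : R) * (x * π y) := by rw [← hx]; ring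
  have hπe : ∀ x : (FractionRing R), π x = x * e := by
    intro x
    have := hmul x 1
    rwa [mul_one, ← he] at this
  have hee : e * e = e := by
    have h1 : π e = e := hπid e (hπN 1)
    have h2 : π e = e * e := hπe e
    rw [← h2]
    exact h1
  have heN : ∀ z : (FractionRing R), e * z ∈ N := by
    intro z
    rw [mul_comm, ← hπe z]
    exact hπN z
  have hne : e ≠ 0 := by
    intro h0
    apply hN
    rw [eq_bot_iff]
    intro x hx
    have h1 := hπid x hx
    rw [hπe, h0, mul_zero] at h1
    rw [Submodule.mem_bot]
    exact h1.symm
  -- finite generation gives integrality of all elements of N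
  obtain ⟨G, hG⟩ := hFG
  obtain ⟨b, hb⟩ := IsLocalization.exist_integer_multiples_of_finset (nonZeroDivisors R) G
  have hble : ∀ n ∈ N, IsLocalization.IsInteger R ((b : R) • n) := by
    intro n hn
    have hsub : N ≤ Submodule.comap ((b : R) • (LinearMap.id : (FractionRing R) →ₗ[R] (FractionRing R)))
        (LinearMap.range (Algebra.linearMap R (FractionRing R))) := by
      rw [← hG, Submodule.span_le]
      intro g hg
      refine Submodule.mem_comap.mpr ?_
      obtain ⟨c, hc⟩ := hb g hg
      refine ⟨c, ?_⟩
      simpa using hc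
    obtain ⟨c, hc⟩ := hsub hn
    exact ⟨c, hc⟩
  have hNint : ∀ n ∈ N, IsLocalization.IsInteger R n := by
    intro n hn
    have hbu : IsUnit (algebraMap R (FractionRing R) (b : R)) := IsLocalization.map_units (FractionRing R) b
    have h3 : n = n * e := by rw [← hπe n, hπid n hn]
    have hmN : (↑hbu.unit⁻¹ * n : (FractionRing R)) ∈ N := by
      have h4 : (↑hbu.unit⁻¹ * n : (FractionRing R)) = e * (↑hbu.unit⁻¹ * n) := by
        conv_lhs => rw [h3]
        ring
      rw [h4]
      exact heN _
    have hnm : (b : R) • (↑hbu.unit⁻¹ * n : (FractionRing R)) = n := by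
      rw [Algebra.smul_def, ← mul_assoc, IsUnit.mul_val_inv hbu, one_mul]
    have h5 := hble _ hmN
    rwa [hnm] at h5
  -- e is the image of an idempotent of R
  have heN1 : e ∈ N := by have := heN 1; rwa [mul_one] at this
  obtain ⟨e₀, he₀⟩ := hNint e heN1
  have hid₀ : e₀ * e₀ = e₀ := hf (by rw [map_mul, he₀, hee])
  have hne₀ : e₀ ≠ 0 := fun h => hne (by rw [← he₀, h, map_zero])
  have hpow : ∀ k : ℕ, e₀ ^ (k + 1) = e₀ := by
    intro k
    induction k with
    | zero => rw [pow_one]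
    | succ k ih => rw [pow_succ, ih, hid₀]
  set I : Ideal R := Ideal.span {1 - e₀} with hIdef
  set I' : Ideal R := Ideal.span {e₀} with hI'def
  have hker : ∀ w : R, e * algebraMap R (FractionRing R) w = 0 ↔ w ∈ I := by
    intro w
    constructor
    · intro hw
      have h1 : algebraMap R (FractionRing R) (e₀ * w) = 0 := by rw [map_mul, he₀, hw]
      have h2 : e₀ * w = 0 := hf (by rw [h1, map_zero])
      rw [hIdef, Ideal.mem_span_singleton]
      exact ⟨w, by rw [sub_mul, one_mul, h2, sub_zero]⟩
    · intro hw
      rw [hIdef, Ideal.mem_span_singleton] at hw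
      obtain ⟨c, rfl⟩ := hw
      have h3 : e₀ * ((1 - e₀) * c) = 0 := by
        rw [show e₀ * ((1 - e₀) * c) = (e₀ - e₀ * e₀) * c by ring, hid₀, sub_self, zero_mul]
      calc e * algebraMap R (FractionRing R) ((1 - e₀) * c)
          = algebraMap R (FractionRing R) (e₀ * ((1 - e₀) * c)) := by
            conv_rhs => rw [map_mul, he₀]
        _ = 0 := by rw [h3, map_zero]
  have hItop : I ≠ ⊤ := by
    intro htop
    have h1 : (1 : R) ∈ I := htop ▸ Submodule.mem_top
    rw [hIdef, Ideal.mem_span_singleton] at h1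
    obtain ⟨c, hc⟩ := h1
    apply hne₀
    have h2 : e₀ = e₀ * ((1 - e₀) * c) := by conv_lhs => rw [← mul_one e₀, hc]
    rw [h2, show e₀ * ((1 - e₀) * c) = (e₀ - e₀ * e₀) * c by ring, hid₀, sub_self, zero_mul]
  haveI hKnt : Nontrivial (R ⧸ I) := Ideal.Quotient.nontrivial_iff.mpr hItop
  haveI hKred : IsReduced (R ⧸ I) := by
    constructor
    intro x hx
    obtain ⟨n, hn⟩ := hx
    obtain ⟨r, rfl⟩ := Ideal.Quotient.mk_surjective x
    cases n with
    | zero =>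
      rw [pow_zero] at hn
      exact absurd hn one_ne_zero
    | succ n =>
      have hrn : (r : R) ^ (n + 1) ∈ I := by
        rw [← map_pow] at hn
        exact Ideal.Quotient.eq_zero_iff_mem.mp hn
      rw [hIdef, Ideal.mem_span_singleton] at hrn
      obtain ⟨c, hc⟩ := hrn
      have h1 : (e₀ * r) ^ (n + 1) = 0 := by
        rw [mul_pow, hpow n, hc,
          show e₀ * ((1 - e₀) * c) = (e₀ - e₀ * e₀) * c by ring, hid₀, sub_self, zero_mul]
      have h2 : e₀ * r = 0 := IsNilpotent.eq_zero ⟨n + 1, h1⟩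
      have h3 : r ∈ I := by
        rw [hIdef, Ideal.mem_span_singleton]
        exact ⟨r, by rw [sub_mul, one_mul, h2, sub_zero]⟩
      exact Ideal.Quotient.eq_zero_iff_mem.mpr h3
  have hfinK : (minimalPrimes (R ⧸ I)).Finite := by
    have hsub : I.minimalPrimes ⊆ minimalPrimes R := by
      intro q hq
      haveI hqp : q.IsPrime := hq.1.1
      obtain ⟨p', hp', hp'q⟩ := Ideal.exists_minimalPrimes_le (bot_le : (⊥ : Ideal R) ≤ q)
      have h01 : e₀ * (1 - e₀) ∈ p' := by
        rw [show e₀ * (1 - e₀) = e₀ - e₀ * e₀ by ring, hid₀, sub_self]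
        exact p'.zero_mem
      rcases hp'.1.1.mem_or_mem h01 with h | h
      · exfalso
        have h1 : (1 - e₀) ∈ q := hq.1.2 (Ideal.subset_span rfl)
        have h2 : (1 : R) ∈ q := by
          have h3 := q.add_mem (hp'q h) h1
          rwa [show e₀ + (1 - e₀) = (1 : R) by ring] at h3
        exact hqp.ne_top ((Ideal.eq_top_iff_one q).mpr h2)
      · have hIp' : I ≤ p' := by
          rw [hIdef, Ideal.span_le, Set.singleton_subset_iff]
          exact h
        have hqp' : q ≤ p' := hq.2 ⟨hp'.1.1, hIp'⟩ hp'q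
        have h4 : q = p' := le_antisymm hqp' hp'q
        rwa [h4]
    have hfinI : I.minimalPrimes.Finite := hfin.subset hsub
    rw [Ideal.minimalPrimes_eq_comap] at hfinI
    exact Set.Finite.of_finite_image hfinI
      ((Ideal.comap_injective_of_surjective _ Ideal.Quotient.mk_surjective).injOn)
  -- every non-zero-divisor of (FractionRing R) is a unit
  have hTunit : ∀ y ∈ nonZeroDivisors (FractionRing R), IsUnit y := by
    intro y hy
    obtain ⟨⟨a, s⟩, hys⟩ := IsLocalization.surj (nonZeroDivisors R) y
    have ha : a ∈ nonZeroDivisors R := by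
      rw [mem_nonZeroDivisors_iff_right]
      intro c hc
      apply hf
      rw [map_zero]
      have hfs : algebraMap R (FractionRing R) (s : R) ∈ nonZeroDivisors (FractionRing R) :=
        (IsLocalization.map_units (FractionRing R) s).mem_nonZeroDivisors
      have h1 : (algebraMap R (FractionRing R) c * y) * algebraMap R (FractionRing R) (s : R) = 0 := by
        rw [mul_assoc, hys, ← map_mul, hc, map_zero]
      have h2 : algebraMap R (FractionRing R) c * y = 0 := (mem_nonZeroDivisors_iff_right.mp hfs) _ h1
      exact (mem_nonZeroDivisors_iff_right.mp hy) _ h2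
    have h3 : IsUnit (y * algebraMap R (FractionRing R) (s : R)) := by
      rw [hys]
      exact IsLocalization.map_units (FractionRing R) (⟨a, ha⟩ : nonZeroDivisors R)
    exact isUnit_of_mul_isUnit_left h3
  -- every non-zero-divisor of R ⧸ I is a unit
  have huK : ∀ x ∈ nonZeroDivisors (R ⧸ I), IsUnit x := by
    intro x hx
    obtain ⟨r, rfl⟩ := Ideal.Quotient.mk_surjective x
    set y : (FractionRing R) := e * algebraMap R (FractionRing R) r + (1 - e) with hy
    have hey : e * y = e * algebraMap R (FractionRing R) r := by
      rw [hy]; linear_combination (algebraMap R (FractionRing R) r - 1) * hee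
    have hymem : y ∈ nonZeroDivisors (FractionRing R) := by
      rw [mem_nonZeroDivisors_iff_right]
      intro z hz
      obtain ⟨⟨a, s⟩, hzs⟩ := IsLocalization.surj (nonZeroDivisors R) z
      have h1 : e * algebraMap R (FractionRing R) r * z = 0 := by
        have h0 := congrArg (fun w => e * w) hz
        simp only [mul_zero] at h0
        calc e * algebraMap R (FractionRing R) r * z = (e * y) * z := by rw [hey]
          _ = e * (z * y) := by ring
          _ = 0 := h0
      have h2 : e * algebraMap R (FractionRing R) (r * a) = 0 := by
        rw [map_mul]
        calc e * (algebraMap R (FractionRing R) r * algebraMap R (FractionRing R) a)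
            = (e * algebraMap R (FractionRing R) r * z) * algebraMap R (FractionRing R) (s : R) := by rw [mul_assoc, hzs]; ring
          _ = 0 := by rw [h1, zero_mul]
      have h3 : Ideal.Quotient.mk I a = 0 := by
        apply mem_nonZeroDivisors_iff_right.mp hx
        rw [← map_mul, Ideal.Quotient.eq_zero_iff_mem]
        rw [mul_comm a r]
        exact (hker _).mp h2
      have h4 : e * z = 0 := by
        have ha : a ∈ I := Ideal.Quotient.eq_zero_iff_mem.mp h3
        have h5 : e * algebraMap R (FractionRing R) a = 0 := (hker a).mpr ha
        have hs : IsUnit (algebraMap R (FractionRing R) (s : R)) := IsLocalization.map_units (FractionRing R) s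
        apply hs.mul_left_cancel
        rw [mul_zero]
        calc algebraMap R (FractionRing R) (s : R) * (e * z) = e * (z * algebraMap R (FractionRing R) (s : R)) := by ring
          _ = e * algebraMap R (FractionRing R) a := by rw [hzs]
          _ = 0 := h5
      have h6 : z * y = e * algebraMap R (FractionRing R) r * z + z - e * z := by rw [hy]; ring
      rw [h1, h4, hz] at h6
      simpa using h6.symm
    obtain ⟨u, hu'⟩ := hTunit y hymem
    have hintu : IsLocalization.IsInteger R (e * ↑u⁻¹) := hNint _ (heN _)
    obtain ⟨c, hc⟩ := hintu
    rw [isUnit_iff_exists_inv]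
    refine ⟨Ideal.Quotient.mk I c, ?_⟩
    rw [← map_mul, ← map_one (Ideal.Quotient.mk I), Ideal.Quotient.mk_eq_mk_iff_sub_mem]
    apply (hker _).mp
    have hyu1 : y * ↑u⁻¹ = 1 := by rw [← hu']; exact Units.mul_inv u
    calc e * algebraMap R (FractionRing R) (r * c - 1)
        = (e * algebraMap R (FractionRing R) r) * algebraMap R (FractionRing R) c - e := by
          rw [map_sub, map_mul, map_one]; ring
      _ = (e * y) * (e * ↑u⁻¹) - e := by rw [hey, hc]
      _ = (e * e) * (y * ↑u⁻¹) - e := by ring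
      _ = 0 := by rw [hee, hyu1, mul_one, sub_self]
  -- splitting of R along the idempotent
  have hcop : IsCoprime I I' := by
    rw [Ideal.isCoprime_iff_sup_eq, Ideal.eq_top_iff_one]
    exact Submodule.mem_sup.mpr
      ⟨1 - e₀, Ideal.subset_span rfl, e₀, Ideal.subset_span rfl, by ring⟩
  have hinf : I ⊓ I' = ⊥ := by
    rw [eq_bot_iff]
    intro x hxm
    obtain ⟨hx1, hx2⟩ := Submodule.mem_inf.mp hxm
    rw [hIdef, Ideal.mem_span_singleton] at hx1
    rw [hI'def, Ideal.mem_span_singleton] at hx2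
    obtain ⟨c1, hc1⟩ := hx1
    obtain ⟨c2, hc2⟩ := hx2
    have h1 : e₀ * x = x := by rw [hc2, ← mul_assoc, hid₀]
    have h2 : e₀ * x = 0 := by
      rw [hc1, show e₀ * ((1 - e₀) * c1) = (e₀ - e₀ * e₀) * c1 by ring, hid₀, sub_self, zero_mul]
    rw [Submodule.mem_bot, ← h1, h2]
  have equivR : R ≃+* (R ⧸ I) × (R ⧸ I') :=
    (RingEquiv.quotientBot R).symm.trans
      ((Ideal.quotEquivOfEq hinf.symm).trans (Ideal.quotientInfEquivQuotientProd I I' hcop))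
  obtain ⟨F, S₀, _, _, hF, ⟨eq1⟩⟩ := containsFieldSummand_of_total (R ⧸ I) hfinK huK
  exact hns ⟨F, S₀ × (R ⧸ I'), inferInstance, inferInstance, hF,
    ⟨(equivR.trans (RingEquiv.prodCongr eq1 (RingEquiv.refl (R ⧸ I')))).trans
      (ringProdAssoc F S₀ (R ⧸ I'))⟩⟩
end

section
/- Let R be a commutative reduced ring with finitely many minimal primes that does not contain a field as a ring direct summand, and let M be a finitely generated R-module. Then the intersection over all non-zero-divisors r of R of the submodules rM is zero. -/
universe u

open Submodule
open scoped Classical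

section Aux

variable {R : Type u} [CommRing R]




/-- Complement trick: for any `c`, there is `b` lying in every chosen prime avoiding `c`,
with `c + b` a non-zero-divisor. -/
lemma exists_complement (F : Finset (Ideal R)) (hprime : ∀ P ∈ F, P.IsPrime)
    (hinf : sInf (F : Set (Ideal R)) = ⊥)
    (hirr : ∀ P ∈ F, ¬ sInf ((F.erase P : Finset (Ideal R)) : Set (Ideal R)) ≤ P)
    (c : R) :
    ∃ b : R, (∀ P ∈ F, c ∉ P → b ∈ P) ∧ c + b ∈ nonZeroDivisors R := by
  classical
  set Bad : Finset (Ideal R) := F.filter (fun P => c ∈ P) with hBad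
  set Good : Finset (Ideal R) := F.filter (fun P => c ∉ P) with hGood
  set I : Ideal R := sInf (Good : Set (Ideal R)) with hI
  have hnsub : ¬ ((I : Set R) ⊆ ⋃ P ∈ (Bad : Set (Ideal R)), (P : Set R)) := by
    intro hsub
    rw [Ideal.subset_union_prime ⊥ ⊥ (fun P hP _ _ => hprime P (Finset.mem_filter.mp hP).1)]
      at hsub
    obtain ⟨P, hPBad, hle⟩ := hsub
    have hPF : P ∈ F := (Finset.mem_filter.mp hPBad).1
    have hcP : c ∈ P := (Finset.mem_filter.mp hPBad).2
    refine hirr P hPF (le_trans (sInf_le_sInf ?_) hle)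
    intro Q hQ
    rcases hQ with hQ
    have hQG : Q ∈ Good := hQ
    have := Finset.mem_filter.mp hQG
    exact Finset.mem_coe.mpr (Finset.mem_erase.mpr ⟨fun h => this.2 (h ▸ hcP), this.1⟩)
  obtain ⟨b, hbI, hbBad⟩ := Set.not_subset.mp hnsub
  refine ⟨b, ?_, ?_⟩
  · intro P hPF hcP
    exact (Ideal.mem_sInf.mp hbI) (Finset.mem_coe.mpr (Finset.mem_filter.mpr ⟨hPF, hcP⟩))
  · have hcb : ∀ P ∈ F, c + b ∉ P := by
      intro P hPF hmem
      by_cases hc : c ∈ P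
      · have hbP : b ∉ P := by
          intro hbP
          exact hbBad (Set.mem_biUnion (Finset.mem_coe.mpr
            (Finset.mem_filter.mpr ⟨hPF, hc⟩)) hbP)
        exact hbP (by simpa using P.sub_mem hmem hc)
      · have hbP : b ∈ P := (Ideal.mem_sInf.mp hbI)
          (Finset.mem_coe.mpr (Finset.mem_filter.mpr ⟨hPF, hc⟩))
        exact hc (by simpa using P.sub_mem hmem hbP)
    rw [mem_nonZeroDivisors_iff_right]
    intro t ht
    by_contra htne
    have : t ∉ (⊥ : Ideal R) := by simpa using htne
    rw [← hinf, Ideal.mem_sInf] at this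
    push_neg at this
    obtain ⟨P, hPF, htP⟩ := this
    have hPF' : P ∈ F := Finset.mem_coe.mp hPF
    have : t * (c + b) ∈ P := by rw [ht]; exact P.zero_mem
    rcases (hprime P hPF').mem_or_mem this with h | h
    · exact htP h
    · exact hcb P hPF' h

/-- The key vanishing lemma over one prime. -/
lemma divKill (p q : Ideal R) (hp : p.IsPrime) (hpq : p ⊓ q = ⊥)
    (c₀ : R) (hc₀ : c₀ ∉ p) (hc₀' : ∀ t, 1 - c₀ * t ∉ p) :
    ∀ (k : ℕ) (M : Type u) (_ : AddCommGroup M) (_ : Module R M) (S : Finset M),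
      S.card ≤ k → ∀ (x : M),
      (∀ c ∉ p, ∃ w ∈ q • Submodule.span R (S : Set M), x = c • w) → x = 0 := by
  classical
  have hone : (1 : R) ∉ p := fun h => hp.ne_top (Ideal.eq_top_of_isUnit_mem p h isUnit_one)
  have hbase : ∀ (M : Type u) (_ : AddCommGroup M) (_ : Module R M) (x : M),
      (∀ c ∉ p, ∃ w ∈ q • Submodule.span R ((∅ : Finset M) : Set M), x = c • w) → x = 0 := by
    intro M _ _ x hdiv
    obtain ⟨w, hw, hxw⟩ := hdiv 1 hone
    simp only [Finset.coe_empty, Submodule.span_empty] at hw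
    have : w = 0 := by
      have := Submodule.smul_le_right (I := q) (N := (⊥ : Submodule R M)) hw
      simpa using this
    rw [hxw, this, smul_zero]
  intro k
  induction k with
  | zero =>
    intro M _ _ S hS x hdiv
    have hSe : S = ∅ := Finset.card_eq_zero.mp (Nat.le_zero.mp hS)
    exact hbase M _ _ x (hSe ▸ hdiv)
  | succ k ih =>
    intro M _ _ S hS x hdiv
    by_cases hSe : S = ∅
    · exact hbase M _ _ x (hSe ▸ hdiv)
    · -- step: for each m ∈ S, x ∈ q • span {m}
      have hstep : ∀ m ∈ S, ∃ a ∈ q, a • m = x := by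
        intro m hm
        set N : Submodule R M := q • Submodule.span R {m} with hN
        set π : M →ₗ[R] M ⧸ N := N.mkQ with hπ
        have hπx : π x = 0 := by
          refine ih (M ⧸ N) inferInstance inferInstance ((S.erase m).image π) ?_ (π x) ?_
          · exact le_trans (Finset.card_image_le)
              (by rw [Finset.card_erase_of_mem hm]; omega)
          · intro c hc
            obtain ⟨w, hw, hxw⟩ := hdiv c hc
            refine ⟨π w, ?_, by rw [hxw, map_smul]⟩
            have h1 : π w ∈ Submodule.map π (q • Submodule.span R (S : Set M)) :=
              Submodule.mem_map_of_mem hw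
            rw [Submodule.map_smul'', Submodule.map_span] at h1
            have h2 : (π '' (S : Set M)) ⊆
                (((S.erase m).image π : Finset (M ⧸ N)) : Set (M ⧸ N)) ∪ {π m} := by
              rintro y ⟨z, hz, rfl⟩
              by_cases hzm : z = m
              · exact Or.inr (by simp [hzm])
              · exact Or.inl (by
                  simp only [Finset.coe_image, Set.mem_image, Finset.mem_coe]
                  exact ⟨z, Finset.mem_erase.mpr ⟨hzm, hz⟩, rfl⟩)
            have h3 : Submodule.span R (π '' (S : Set M)) ≤
                Submodule.span R (((S.erase m).image π : Finset (M ⧸ N)) : Set (M ⧸ N))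
                  ⊔ Submodule.span R {π m} := by
              rw [← Submodule.span_union]
              exact Submodule.span_mono h2
            have h4 : q • Submodule.span R ((π '' (S : Set M))) ≤
                q • Submodule.span R (((S.erase m).image π : Finset (M ⧸ N)) : Set (M ⧸ N))
                  ⊔ q • Submodule.span R {π m} := by
              refine le_trans (Submodule.smul_mono le_rfl h3) ?_
              rw [Submodule.smul_sup]
            have h5 : q • Submodule.span R ({π m} : Set (M ⧸ N)) = ⊥ := by
              have h5a : q • Submodule.span R ({π m} : Set (M ⧸ N)) =
                  Submodule.map π (q • Submodule.span R {m}) := by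
                rw [Submodule.map_smul'', Submodule.map_span, Set.image_singleton]
              rw [h5a, eq_bot_iff]
              rintro y ⟨z, hz, rfl⟩
              simpa [hπ] using (Submodule.Quotient.mk_eq_zero N).mpr hz

            have h6 := h4 h1
            rw [h5, sup_bot_eq] at h6
            exact h6
        rw [hπ, Submodule.mkQ_apply, Submodule.Quotient.mk_eq_zero N] at hπx
        rw [hN] at hπx
        exact Submodule.mem_smul_span_singleton.mp hπx
      -- choose coefficients
      choose a ha hax using hstep
      set β : R := ∏ m ∈ S.attach, a m.1 m.2 with hβ
      by_cases hβp : β ∈ p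
      · rw [Ideal.IsPrime.prod_mem_iff] at hβp
        obtain ⟨⟨m, hm⟩, _, hmem⟩ := hβp
        have : a m hm ∈ p ⊓ q := ⟨hmem, ha m hm⟩
        rw [hpq] at this
        have h0 : a m hm = 0 := by simpa using this
        rw [← hax m hm, h0, zero_smul]
      · -- conductor
        have Hcond : ∀ w ∈ q • Submodule.span R (S : Set M),
            β • w ∈ Submodule.span R {x} := by
          intro w hw
          refine Submodule.smul_induction_on hw ?_ ?_
          · intro r hr n hn
            refine Submodule.span_induction ?_ ?_ ?_ ?_ hn
            · intro m hmS
              have hmS' : m ∈ S := hmS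
              have e1 : β • (r • m) =
                  ((∏ m' ∈ S.attach.erase ⟨m, hmS'⟩, a m'.1 m'.2) * r) • x := by
                rw [← hax m hmS']
                rw [smul_smul, smul_smul]
                congr 1
                rw [hβ, ← Finset.mul_prod_erase S.attach _ (Finset.mem_attach S ⟨m, hmS'⟩)]
                ring
              rw [e1]
              exact Submodule.smul_mem _ _ (Submodule.mem_span_singleton_self x)
            · simp
            · intro y z _ _ hy hz
              rw [smul_add, smul_add]
              exact Submodule.add_mem _ hy hz
            · intro t y _ hy
              have e2 : β • r • t • y = t • (β • r • y) := by
                simp only [smul_smul]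
                congr 1
                ring
              rw [e2]
              exact Submodule.smul_mem _ _ hy
          · intro y z hy hz
            rw [smul_add]
            exact Submodule.add_mem _ hy hz
        have A : ∀ c ∉ p, ∃ t : R, x = (c * t) • x := by
          intro c hc
          have hcβ : c * β ∉ p := fun h => ((hp.mem_or_mem h).elim hc hβp)
          obtain ⟨w, hw, hxw⟩ := hdiv (c * β) hcβ
          obtain ⟨t, ht⟩ := Submodule.mem_span_singleton.mp (Hcond w hw)
          refine ⟨t, ?_⟩
          calc x = (c * β) • w := hxw
            _ = c • (β • w) := by rw [mul_smul]
            _ = c • (t • x) := by rw [← ht]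
            _ = (c * t) • x := by rw [smul_smul]
        obtain ⟨t₀, ht₀⟩ := A c₀ hc₀
        have hsx : (1 - c₀ * t₀) • x = 0 := by
          rw [sub_smul, one_smul, ← ht₀, sub_self]
        obtain ⟨t₁, ht₁⟩ := A (1 - c₀ * t₀) (hc₀' t₀)
        calc x = ((1 - c₀ * t₀) * t₁) • x := ht₁
          _ = t₁ • ((1 - c₀ * t₀) • x) := by rw [mul_comm, mul_smul]
          _ = 0 := by rw [hsx, smul_zero]

end Aux

theorem Taux : ∀ (n : ℕ) (R : Type u) (_ : CommRing R) (F : Finset (Ideal R)),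
    F.card ≤ n → (∀ P ∈ F, P.IsPrime) → sInf (F : Set (Ideal R)) = ⊥ →
    (∀ P ∈ F, ¬ sInf ((F.erase P : Finset (Ideal R)) : Set (Ideal R)) ≤ P) →
    (∀ P ∈ F, ¬ IsField (R ⧸ P)) →
    ∀ (M : Type u) (_ : AddCommGroup M) (_ : Module R M), Module.Finite R M →
    ∀ x : M, (∀ r ∈ nonZeroDivisors R, ∃ m : M, x = r • m) → x = 0 := by
  classical
  have trivialCase : ∀ (R : Type u) (_ : CommRing R) (M : Type u)
      (_ : AddCommGroup M) (_ : Module R M), (1 : R) = 0 → ∀ x : M, x = 0 := by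
    intro R _ M _ _ h1 x
    calc x = (1 : R) • x := (one_smul R x).symm
      _ = (0 : R) • x := by rw [h1]
      _ = 0 := zero_smul R x
  intro n
  induction n with
  | zero =>
    intro R _ F hcard hprime hinf hirr hnf M _ _ _ x hdiv
    have hFe : F = ∅ := Finset.card_eq_zero.mp (Nat.le_zero.mp hcard)
    have h1 : (1 : R) = 0 := by
      have : (1 : R) ∈ (⊥ : Ideal R) := by
        rw [← hinf, hFe]
        simp [Ideal.mem_sInf]
      simpa using this
    exact trivialCase R ‹_› M ‹_› ‹_› h1 x
  | succ n ih =>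
    intro R _ F hcard hprime hinf hirr hnf M _ _ hMfin x hdiv
    by_cases hFe : F = ∅
    · have h1 : (1 : R) = 0 := by
        have : (1 : R) ∈ (⊥ : Ideal R) := by
          rw [← hinf, hFe]
          simp [Ideal.mem_sInf]
        simpa using this
      exact trivialCase R ‹_› M ‹_› ‹_› h1 x
    obtain ⟨p, hpF⟩ := Finset.nonempty_iff_ne_empty.mpr hFe
    set q : Ideal R := sInf ((F.erase p : Finset (Ideal R)) : Set (Ideal R)) with hq
    have hq_le : ∀ P ∈ F.erase p, q ≤ P := fun P hP => sInf_le (Finset.mem_coe.mpr hP)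
    have hpq : p ⊓ q = ⊥ := by
      rw [← hinf, ← Finset.insert_erase hpF]
      rw [Finset.coe_insert, sInf_insert]
    -- G2a
    have key : ∀ r ∈ nonZeroDivisors R,
        ∃ w ∈ q • (⊤ : Submodule R M), x = r • w := by
      intro r hr
      obtain ⟨m₀, hm₀⟩ := hdiv r hr
      set Kr : Submodule R M := LinearMap.ker (LinearMap.lsmul R M r) with hKr
      set D : Submodule R M := q • ⊤ ⊔ Kr with hD
      have htor : Module.IsTorsionBySet R (M ⧸ D) (q : Set R) := by
        rw [Module.isTorsionBySet_quotient_iff]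
        intro z κ hκ
        exact le_sup_left (α := Submodule R M) (Submodule.smul_mem_smul hκ Submodule.mem_top)
      letI : Module (R ⧸ q) (M ⧸ D) := htor.module
      have hmksmul : ∀ (b : R) (v : M ⧸ D), (Ideal.Quotient.mk q b) • v = b • v :=
        fun b v => Module.IsTorsionBySet.mk_smul htor b v
      have hMD : m₀ ∈ D := by
        have hz : (Submodule.Quotient.mk m₀ : M ⧸ D) = 0 := by
          refine ih (R ⧸ q) inferInstance ((F.erase p).image (Ideal.map (Ideal.Quotient.mk q)))
            ?_ ?_ ?_ ?_ ?_ (M ⧸ D) inferInstance inferInstance ?_ (Submodule.Quotient.mk m₀) ?_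
          · refine le_trans Finset.card_image_le ?_
            rw [Finset.card_erase_of_mem hpF]
            omega
          · intro P' hP'
            obtain ⟨P, hP, rfl⟩ := Finset.mem_image.mp hP'
            haveI := hprime P (Finset.mem_of_mem_erase hP)
            exact Ideal.map_isPrime_of_surjective Ideal.Quotient.mk_surjective
              (by rw [Ideal.mk_ker]; exact hq_le P hP)
          · rw [eq_bot_iff]
            intro ξ hξ
            obtain ⟨t, rfl⟩ := Ideal.Quotient.mk_surjective ξ
            rw [Ideal.mem_sInf] at hξ
            have ht : ∀ P ∈ F.erase p, t ∈ P := by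
              intro P hP
              have h1 := hξ (Finset.mem_coe.mpr (Finset.mem_image_of_mem _ hP))
              have h2 : t ∈ Ideal.comap (Ideal.Quotient.mk q)
                  (Ideal.map (Ideal.Quotient.mk q) P) := h1
              rw [Ideal.comap_map_of_surjective _ Ideal.Quotient.mk_surjective,
                ← RingHom.ker_eq_comap_bot, Ideal.mk_ker,
                sup_eq_left.mpr (hq_le P hP)] at h2
              exact h2
            have htq : t ∈ q := by
              rw [hq, Ideal.mem_sInf]
              intro P hP
              exact ht P (Finset.mem_coe.mp hP)
            simpa using Ideal.Quotient.eq_zero_iff_mem.mpr htq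
          · intro P' hP' hle
            obtain ⟨P, hP, rfl⟩ := Finset.mem_image.mp hP'
            refine hirr P (Finset.mem_of_mem_erase hP) ?_
            intro t ht
            have h1 : (Ideal.Quotient.mk q t) ∈
                sInf (((((F.erase p).image (Ideal.map (Ideal.Quotient.mk q))).erase
                  (Ideal.map (Ideal.Quotient.mk q) P)) : Finset (Ideal (R ⧸ q))) :
                    Set (Ideal (R ⧸ q))) := by
              rw [Ideal.mem_sInf]
              intro J hJ
              have hJ' := Finset.mem_coe.mp hJ
              have hJne := (Finset.mem_erase.mp hJ').1
              obtain ⟨Q, hQ, rfl⟩ := Finset.mem_image.mp (Finset.mem_of_mem_erase hJ')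
              have hQP : Q ≠ P := fun h => hJne (by rw [h])
              have htQ : t ∈ Q := (Ideal.mem_sInf.mp ht) (Finset.mem_coe.mpr
                (Finset.mem_erase.mpr ⟨hQP, Finset.mem_of_mem_erase hQ⟩))
              exact Ideal.mem_map_of_mem _ htQ
            have h2 := hle h1
            have h3 : t ∈ Ideal.comap (Ideal.Quotient.mk q)
                (Ideal.map (Ideal.Quotient.mk q) P) := h2
            rw [Ideal.comap_map_of_surjective _ Ideal.Quotient.mk_surjective,
              ← RingHom.ker_eq_comap_bot, Ideal.mk_ker,
              sup_eq_left.mpr (hq_le P hP)] at h3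
            exact h3
          · intro P' hP' hf
            obtain ⟨P, hP, rfl⟩ := Finset.mem_image.mp hP'
            have e := DoubleQuot.quotQuotEquivQuotOfLE (hq_le P hP)
            exact hnf P (Finset.mem_of_mem_erase hP)
              (MulEquiv.isField hf e.symm.toMulEquiv)
          · haveI : Module.Finite R (M ⧸ D) := inferInstance
            haveI := Module.IsTorsionBySet.isScalarTower htor (S := R)
            exact Module.Finite.of_restrictScalars_finite R (R ⧸ q) (M ⧸ D)
          · intro r' hr'
            obtain ⟨c, rfl⟩ := Ideal.Quotient.mk_surjective r'
            have hcP : ∀ P ∈ F.erase p, c ∉ P := by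
              intro P hP hcPmem
              have h1 : ¬ sInf ((((F.erase p).erase P) : Finset (Ideal R)) :
                  Set (Ideal R)) ≤ P := by
                intro hle
                refine hirr P (Finset.mem_of_mem_erase hP) (le_trans (sInf_le_sInf ?_) hle)
                rw [Finset.erase_right_comm]
                exact Finset.coe_subset.mpr (Finset.erase_subset _ _)
              obtain ⟨t, htI, htP⟩ := SetLike.not_le_iff_exists.mp h1
              have htc : t * c ∈ q := by
                rw [hq, Ideal.mem_sInf]
                intro Q hQ
                have hQ' := Finset.mem_coe.mp hQ
                by_cases hQP : Q = P
                · subst hQP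
                  exact Ideal.mul_mem_left _ t hcPmem
                · have : t ∈ Q := (Ideal.mem_sInf.mp htI) (Finset.mem_coe.mpr
                    (Finset.mem_erase.mpr ⟨hQP, hQ'⟩))
                  exact Ideal.mul_mem_right c _ this
              have h0 : (Ideal.Quotient.mk q t) * (Ideal.Quotient.mk q c) = 0 := by
                rw [← map_mul, Ideal.Quotient.eq_zero_iff_mem]
                exact htc
              have h2 := mem_nonZeroDivisors_iff_right.mp hr' _ h0
              rw [Ideal.Quotient.eq_zero_iff_mem] at h2
              exact htP (hq_le P hP h2)
            obtain ⟨b, hb, hreg⟩ := exists_complement F hprime hinf hirr c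
            have hbq : b ∈ q := by
              rw [hq, Ideal.mem_sInf]
              intro P hP
              have hP' := Finset.mem_coe.mp hP
              exact hb P (Finset.mem_of_mem_erase hP') (hcP P hP')
            obtain ⟨m₁, hm₁⟩ := hdiv ((c + b) * r) (mul_mem hreg hr)
            refine ⟨Submodule.Quotient.mk m₁, ?_⟩
            have hker : m₀ - (c + b) • m₁ ∈ Kr := by
              rw [hKr, LinearMap.mem_ker, LinearMap.lsmul_apply, smul_sub, ← hm₀,
                smul_smul, mul_comm r (c + b), ← hm₁, sub_self]
            have hDmem : m₀ - (c + b) • m₁ ∈ D := le_sup_right (α := Submodule R M) hker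
            calc (Submodule.Quotient.mk m₀ : M ⧸ D)
                = Submodule.Quotient.mk ((c + b) • m₁) := (Submodule.Quotient.eq D).mpr hDmem
              _ = (c + b) • Submodule.Quotient.mk m₁ := Submodule.Quotient.mk_smul D _ _
              _ = (Ideal.Quotient.mk q (c + b)) • Submodule.Quotient.mk m₁ :=
                  (hmksmul _ _).symm
              _ = (Ideal.Quotient.mk q c) • Submodule.Quotient.mk m₁ := by
                  rw [show Ideal.Quotient.mk q (c + b) = Ideal.Quotient.mk q c from by
                    rw [Ideal.Quotient.mk_eq_mk_iff_sub_mem]; simpa using hbq]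
        rwa [Submodule.Quotient.mk_eq_zero D] at hz
      rw [hD] at hMD
      obtain ⟨w, hw, kr, hkr, hwk⟩ := Submodule.mem_sup.mp hMD
      refine ⟨w, hw, ?_⟩
      have : r • kr = 0 := by
        simpa [hKr, LinearMap.mem_ker] using hkr
      rw [hm₀, ← hwk, smul_add, this, add_zero]
    -- G2b
    have key2 : ∀ c ∉ p, ∃ w ∈ q • (⊤ : Submodule R M), x = c • w := by
      intro c hc
      obtain ⟨b, hb, hreg⟩ := exists_complement F hprime hinf hirr c
      have hbp : b ∈ p := hb p hpF hc
      obtain ⟨w, hw, hxw⟩ := key (c + b) hreg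
      have hbw : ∀ w ∈ q • (⊤ : Submodule R M), b • w = 0 := by
        intro w hw
        refine Submodule.smul_induction_on hw ?_ ?_
        · intro κ hκ n _
          have hinter : b * κ ∈ p ⊓ q := ⟨p.mul_mem_right κ hbp, q.mul_mem_left b hκ⟩
          rw [hpq] at hinter
          rw [smul_smul, (by simpa using hinter : b * κ = 0), zero_smul]
        · intro y z hy hz
          rw [smul_add, hy, hz, add_zero]
      refine ⟨w, hw, ?_⟩
      rw [hxw, add_smul, hbw w hw, add_zero]
    -- finish with divKill
    obtain ⟨S, hSspan⟩ := Module.Finite.fg_top (R := R) (M := M)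
    haveI hpPrime := hprime p hpF
    obtain ⟨I0, hI0b, hI0t⟩ := Ring.not_isField_iff_exists_ideal_bot_lt_and_lt_top.mp (hnf p hpF)
    obtain ⟨y0, hy0I, hy0ne⟩ := Submodule.ne_bot_iff I0 |>.mp hI0b.ne'
    obtain ⟨c₀, rfl⟩ := Ideal.Quotient.mk_surjective y0
    have hc₀ : c₀ ∉ p := fun h => hy0ne (Ideal.Quotient.eq_zero_iff_mem.mpr h)
    have hc₀' : ∀ t, 1 - c₀ * t ∉ p := by
      intro t ht
      have h1 : Ideal.Quotient.mk p (1 : R) = Ideal.Quotient.mk p (c₀ * t) := by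
        rw [Ideal.Quotient.mk_eq_mk_iff_sub_mem]
        exact ht
      have hone : (1 : R ⧸ p) ∈ I0 := by
        rw [show (1 : R ⧸ p) = Ideal.Quotient.mk p (c₀ * t) from by simpa using h1, map_mul]
        exact I0.mul_mem_right _ hy0I
      exact (lt_top_iff_ne_top.mp hI0t) ((Ideal.eq_top_iff_one I0).mpr hone)
    refine divKill p q hpPrime hpq c₀ hc₀ hc₀' S.card M ‹_› ‹_› S le_rfl x ?_
    intro c hc
    obtain ⟨w, hw, hxw⟩ := key2 c hc
    exact ⟨w, by rwa [hSspan], hxw⟩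

/-- Let `R` be a reduced commutative ring with finitely many minimal primes not
containing a field as a ring direct summand, and let `M` be a finitely generated
`R`-module. Then `⋂_{r ∈ Reg(R)} r M = 0`. -/
theorem stmt7 (R : Type u) [CommRing R] [IsReduced R]
    (hfin : (minimalPrimes R).Finite) (hns : ¬ ContainsFieldSummand R)
    (M : Type u) [AddCommGroup M] [Module R M] [Module.Finite R M] :
    (⨅ r ∈ nonZeroDivisors R, Submodule.map (LinearMap.lsmul R M r) ⊤) = ⊥ := by
  classical
  set F : Finset (Ideal R) := hfin.toFinset with hF
  have hcoe : (F : Set (Ideal R)) = minimalPrimes R := hfin.coe_toFinset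
  have hprime : ∀ P ∈ F, P.IsPrime := by
    intro P hP
    have : P ∈ minimalPrimes R := by rw [← hcoe]; exact Finset.mem_coe.mpr hP
    exact this.1.1
  have hinf : sInf (F : Set (Ideal R)) = ⊥ := by
    rw [hcoe]
    have h1 : sInf (minimalPrimes R) = (⊥ : Ideal R).radical := Ideal.sInf_minimalPrimes
    rw [h1, ← Ideal.zero_eq_bot]
    exact nilradical_eq_zero R
  have hirr : ∀ P ∈ F, ¬ sInf ((F.erase P : Finset (Ideal R)) : Set (Ideal R)) ≤ P := by
    intro P hP hle
    have hmin : ∀ Q ∈ F.erase P, Q ≠ P := fun Q hQ => (Finset.mem_erase.mp hQ).1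
    rw [← Finset.inf_id_eq_sInf] at hle
    haveI := hprime P hP
    obtain ⟨Q, hQ, hQP⟩ := (Ideal.IsPrime.inf_le' ‹_›).mp hle
    have hQm : Q ∈ minimalPrimes R := by
      rw [← hcoe]; exact Finset.mem_coe.mpr (Finset.mem_of_mem_erase hQ)
    have hPm : P ∈ minimalPrimes R := by rw [← hcoe]; exact Finset.mem_coe.mpr hP
    have : P ≤ Q := hPm.2 ⟨hQm.1.1, bot_le⟩ hQP
    exact hmin Q hQ (le_antisymm hQP this)
  -- no minimal prime has a field quotient
  have hnf : ∀ P ∈ F, ¬ IsField (R ⧸ P) := by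
    intro p hpF hfield
    set q : Ideal R := sInf ((F.erase p : Finset (Ideal R)) : Set (Ideal R)) with hq
    have hpq : p ⊓ q = ⊥ := by
      rw [← hinf, ← Finset.insert_erase hpF, Finset.coe_insert, sInf_insert]
    have hqp : ¬ q ≤ p := hirr p hpF
    obtain ⟨κ, hκq, hκp⟩ := SetLike.not_le_iff_exists.mp hqp
    have hκ0 : (Ideal.Quotient.mk p κ) ≠ 0 :=
      fun h => hκp (Ideal.Quotient.eq_zero_iff_mem.mp h)
    obtain ⟨yq, hyq⟩ := hfield.mul_inv_cancel hκ0
    obtain ⟨y, rfl⟩ := Ideal.Quotient.mk_surjective yq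
    have hsub : κ * y - 1 ∈ p := by
      rw [← Ideal.Quotient.eq_zero_iff_mem, map_sub, map_mul, hyq, map_one, sub_self]
    have hsup : p ⊔ q = ⊤ := by
      rw [Ideal.eq_top_iff_one]
      have h1 : (1 : R) = κ * y - (κ * y - 1) := by ring
      rw [h1]
      exact Submodule.sub_mem _ (Submodule.mem_sup_right (q.mul_mem_right y hκq))
        (Submodule.mem_sup_left hsub)
    have cop : IsCoprime p q := (Ideal.isCoprime_iff_sup_eq).mpr hsup
    have e1 : (R ⧸ (p ⊓ q)) ≃+* (R ⧸ p) × (R ⧸ q) :=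
      Ideal.quotientInfEquivQuotientProd p q cop
    have e0 : R ≃+* (R ⧸ (p ⊓ q)) := by
      rw [hpq]
      exact RingEquiv.quotientBot R |>.symm
    exact hns ⟨R ⧸ p, R ⧸ q, inferInstance, inferInstance, hfield, ⟨e0.trans e1⟩⟩
  rw [eq_bot_iff]
  intro x hx
  simp only [Submodule.mem_iInf] at hx
  rw [Submodule.mem_bot]
  refine Taux F.card R ‹_› F le_rfl hprime hinf hirr hnf M ‹_› ‹_› ‹_› x ?_
  intro r hr
  obtain ⟨m, -, hm⟩ := Submodule.mem_map.mp (hx r hr)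
  exact ⟨m, by rw [← hm, LinearMap.lsmul_apply]⟩
end

section
/- Let R be a commutative ring whose total ring of quotients is semisimple, and let M be an R-module such that Ext^1_R(M, T) = 0 for every torsion R-module T. Then M is flat. -/
open CategoryTheory

universe u

section Aux

open TensorProduct

noncomputable section

variable {R : Type u} [CommRing R]

lemma bridge {M T : Type u} [AddCommGroup M] [Module R M] [AddCommGroup T] [Module R T]
    (hExt : Subsingleton (((Ext R (ModuleCat.{u} R) 1).obj
      (Opposite.op (ModuleCat.of R M))).obj (ModuleCat.of R T)))
    {F : Type u} [AddCommGroup F] [Module R F] [Module.Projective R F]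
    (p : F →ₗ[R] M) (hp : Function.Surjective p) (φ : ↥(LinearMap.ker p) →ₗ[R] T) :
    ∃ ψ : F →ₗ[R] T, ∀ k : ↥(LinearMap.ker p), ψ (↑k) = φ k := by
  classical
  set Mc := ModuleCat.of R M with hMc
  obtain ⟨P⟩ : Nonempty (ProjectiveResolution Mc) := ⟨ProjectiveResolution.of Mc⟩
  have hz : Limits.IsZero ((P.complex.linearYonedaObj R (ModuleCat.of R T)).homology 1) := by
    have := ModuleCat.isZero_of_subsingleton (((Ext R (ModuleCat R) 1).obj
      (Opposite.op Mc)).obj (ModuleCat.of R T))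
    exact Limits.IsZero.of_iso this (P.isoExt 1 (ModuleCat.of R T)).symm
  have hex : ((P.complex.linearYonedaObj R (ModuleCat.of R T)).sc' 0 1 2).Exact := by
    rw [← HomologicalComplex.exactAt_iff' _ 0 1 2 (by simp) (by simp)]
    rw [HomologicalComplex.exactAt_iff, ShortComplex.exact_iff_isZero_homology]
    exact hz
  have hex' : ∀ (x₂ : ↑(P.complex.X 1) →ₗ[R] T),
      (x₂ ∘ₗ (P.complex.d 2 1 : P.complex.X 2 ⟶ P.complex.X 1).hom = 0) →
      ∃ x₁ : ↑(P.complex.X 0) →ₗ[R] T,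
        x₁ ∘ₗ (P.complex.d 1 0 : P.complex.X 1 ⟶ P.complex.X 0).hom = x₂ := by
    intro x₂ hx₂
    obtain ⟨x₁, hx₁⟩ := (ShortComplex.moduleCat_exact_iff _).mp hex (ModuleCat.ofHom x₂)
      (ModuleCat.hom_ext hx₂)
    exact ⟨x₁.hom, congrArg ModuleCat.Hom.hom hx₁⟩
  -- presentation data from the canonical resolution
  set π0 : P.complex.X 0 →ₗ[R] M := (P.π.f 0 : P.complex.X 0 ⟶ Mc).hom with hπ0
  have hπ0s : Function.Surjective π0 := (ModuleCat.epi_iff_surjective (P.π.f 0)).mp inferInstance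
  set d10 : P.complex.X 1 →ₗ[R] P.complex.X 0 := (P.complex.d 1 0 : _ ⟶ _).hom with hd10
  have hd10π0 : ∀ x, π0 (d10 x) = 0 := fun x =>
    DFunLike.congr_fun (congrArg ModuleCat.Hom.hom P.complex_d_comp_π_f_zero) x
  have hd21 : ∀ x, d10 ((P.complex.d 2 1 : _ ⟶ _) x) = 0 := fun x =>
    DFunLike.congr_fun (congrArg ModuleCat.Hom.hom (P.complex.d_comp_d 2 1 0)) x
  have hexact0 : ∀ x : P.complex.X 0, π0 x = 0 → ∃ y, d10 y = x := by
    have hco : Limits.IsColimit (Limits.CokernelCofork.ofπ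
        (ShortComplex.mk (P.complex.d 1 0) (P.π.f 0) P.complex_d_comp_π_f_zero).g
        (ShortComplex.mk (P.complex.d 1 0) (P.π.f 0) P.complex_d_comp_π_f_zero).zero) :=
      P.isColimitCokernelCofork
    have hexact := ShortComplex.exact_of_g_is_cokernel _ hco
    exact (ShortComplex.moduleCat_exact_iff _).mp hexact
  -- canonical lifting: any φ0 on ker π0 extends to X 0
  have canon : ∀ φ0 : ↥(LinearMap.ker π0) →ₗ[R] T,
      ∃ g : P.complex.X 0 →ₗ[R] T, ∀ k : ↥(LinearMap.ker π0), g (↑k) = φ0 k := by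
    intro φ0
    have hdres : ∀ x, d10 x ∈ LinearMap.ker π0 := fun x => (LinearMap.mem_ker).mpr (hd10π0 x)
    set dres : P.complex.X 1 →ₗ[R] ↥(LinearMap.ker π0) :=
      LinearMap.codRestrict (LinearMap.ker π0) d10 hdres with hdresdef
    set f1 : P.complex.X 1 →ₗ[R] T := φ0 ∘ₗ dres with hf1
    have hf1c : f1 ∘ₗ (P.complex.d 2 1 : P.complex.X 2 ⟶ P.complex.X 1).hom = 0 := by
      apply LinearMap.ext
      intro x
      show f1 ((P.complex.d 2 1 : _ ⟶ _) x) = 0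
      have hz2 : dres ((P.complex.d 2 1 : _ ⟶ _) x) = 0 := by
        apply Subtype.ext
        simpa [hdresdef, LinearMap.codRestrict_apply] using hd21 x
      simp only [hf1, LinearMap.comp_apply, hz2, map_zero]
    obtain ⟨g, hg⟩ := hex' f1 hf1c
    refine ⟨g, ?_⟩
    intro k
    obtain ⟨y, hy⟩ := hexact0 (↑k) k.2
    have hgy : g (d10 y) = f1 y := DFunLike.congr_fun hg y
    rw [hy] at hgy
    rw [hgy]
    show φ0 (dres y) = φ0 k
    congr 1
    exact Subtype.ext (by simpa [hdresdef] using hy)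
  -- transfer to the presentation (F, p)
  have hX0proj : Module.Projective R (P.complex.X 0) := by
    rw [IsProjective.iff_projective]
    exact P.projective 0
  obtain ⟨α, hα⟩ := Module.projective_lifting_property π0 p hπ0s
  obtain ⟨α', hα'⟩ := Module.projective_lifting_property p π0 hp
  set β' : ↥(LinearMap.ker π0) →ₗ[R] ↥(LinearMap.ker p) :=
    LinearMap.restrict α' (fun x hx => by
      have h1 := DFunLike.congr_fun hα' x
      simp only [LinearMap.comp_apply] at h1
      simp only [LinearMap.mem_ker] at hx ⊢
      rw [h1, hx]) with hβ'
  obtain ⟨g, hg⟩ := canon (φ ∘ₗ β')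
  have hmapmem : ∀ x : F, (α' ∘ₗ α - LinearMap.id : F →ₗ[R] F) x ∈ LinearMap.ker p := fun x => by
    have h1 := DFunLike.congr_fun hα' (α x)
    have h2 := DFunLike.congr_fun hα x
    simp only [LinearMap.comp_apply] at h1 h2
    simp only [LinearMap.mem_ker, LinearMap.sub_apply, LinearMap.comp_apply, LinearMap.id_apply,
      map_sub, h1, h2, sub_self]
  set hmap : F →ₗ[R] ↥(LinearMap.ker p) :=
    LinearMap.codRestrict (LinearMap.ker p) (α' ∘ₗ α - LinearMap.id) hmapmem with hhmap
  refine ⟨g ∘ₗ α - φ ∘ₗ hmap, ?_⟩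
  intro k
  have hαk : α (↑k) ∈ LinearMap.ker π0 := by
    have h2 := DFunLike.congr_fun hα (↑k : F)
    simp only [LinearMap.comp_apply] at h2
    simp only [LinearMap.mem_ker] at *
    rw [h2, (LinearMap.mem_ker).mp k.2]
  have hgk : g (α (↑k)) = φ (β' ⟨α ↑k, hαk⟩) := hg ⟨α ↑k, hαk⟩
  simp only [LinearMap.sub_apply, LinearMap.comp_apply, hgk]
  rw [← map_sub]
  congr 1
  apply Subtype.ext
  simp [hβ', hhmap, LinearMap.restrict_apply, LinearMap.codRestrict_apply]

lemma exists_pseudo_idem (h : IsSemisimpleRing (FractionRing R)) (I : Ideal R) :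
    ∃ b ∈ I, ∃ s ∈ nonZeroDivisors R, ∀ a ∈ I, b * a = s * a := by
  classical
  set Q := FractionRing R
  set f := algebraMap R Q with hf
  set J : Ideal Q := I.map f with hJ
  obtain ⟨c, hc⟩ := exists_isCompl (J : Submodule Q Q)
  obtain ⟨e, he, e', he', hee'⟩ := Submodule.mem_sup.mp
    (by rw [hc.sup_eq_top]; trivial : (1 : Q) ∈ (J : Submodule Q Q) ⊔ c)
  have key : ∀ x ∈ J, e * x = x := by
    intro x hx
    have h0 : e * x + e' * x = x := by
      have : (e + e') * x = x := by rw [hee', one_mul]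
      linear_combination this
    have h2 : x - e * x ∈ c := by
      have h1 : x - e * x = x * e' := by linear_combination -h0
      rw [h1]
      exact c.smul_mem x he'
    have h3 : x - e * x ∈ J := J.sub_mem hx (J.mul_mem_left e hx)
    have h4 : x - e * x = 0 := (Submodule.disjoint_def.mp hc.disjoint) _ h3 h2
    linear_combination -h4
  obtain ⟨⟨b', s'⟩, hbs⟩ := (IsLocalization.mem_map_algebraMap_iff (nonZeroDivisors R) Q).mp he
  refine ⟨b', b'.2, s', s'.2, ?_⟩
  intro a ha
  have hfa : f a ∈ J := Ideal.mem_map_of_mem f ha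
  have : f ((b' : R) * a) = f ((s' : R) * a) := by
    rw [map_mul, map_mul, ← hbs]
    rw [mul_comm e (f (s' : R)), mul_assoc, key _ hfa]
  exact IsFractionRing.injective R Q this

/-- Essential ideals contain a nonzerodivisor when the fraction ring is semisimple. -/
lemma essential_ideal_nzd (h : IsSemisimpleRing (FractionRing R)) (A : Ideal R)
    (hA : ∀ B : Ideal R, B ⊓ A = ⊥ → B = ⊥) :
    ∃ s ∈ A, s ∈ nonZeroDivisors R := by
  classical
  set Q := FractionRing R
  set f := algebraMap R Q with hf
  set J : Ideal Q := A.map f with hJ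
  obtain ⟨c, hc⟩ := exists_isCompl (J : Submodule Q Q)
  have hcbot : c = ⊥ := by
    rw [eq_bot_iff]
    intro q hq
    obtain ⟨⟨r, s⟩, hrs⟩ := IsLocalization.mk'_surjective (nonZeroDivisors R) q
    have hspec : q * f (s : R) = f r := by
      rw [← hrs]; exact IsLocalization.mk'_spec Q r s
    have hfr : f r ∈ c := by
      rw [← hspec, mul_comm]
      exact c.smul_mem _ hq
    have hB : Ideal.comap f c ⊓ A = ⊥ := by
      rw [eq_bot_iff]
      intro x hx
      obtain ⟨hx1, hx2⟩ := Submodule.mem_inf.mp hx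
      have hxJ : f x ∈ J := Ideal.mem_map_of_mem f hx2
      have hx0 : f x = 0 := (Submodule.disjoint_def.mp hc.disjoint) _ hxJ hx1
      have : x = 0 := by
        apply IsFractionRing.injective R Q
        rw [map_zero]; exact hx0
      simp [this]
    have hr0 : r = 0 := by
      have hmem : r ∈ Ideal.comap f c := hfr
      rw [hA _ hB] at hmem
      simpa using hmem
    have hq0 : q * f (s : R) = 0 := by rw [hspec, hr0, map_zero]
    have hu : IsUnit (f (s : R)) := IsLocalization.map_units Q s
    have : q = 0 := by
      rcases hu with ⟨v, hv⟩
      have := congrArg (fun z => z * (↑v⁻¹ : Q)) hq0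
      simpa [← hv, mul_assoc] using this
    simp [this]
  have hJtop : J = ⊤ := by
    have := hc.codisjoint
    rw [hcbot] at this
    simpa [codisjoint_iff] using this
  have h1 : (1 : Q) ∈ J := by rw [hJtop]; trivial
  obtain ⟨⟨a, s⟩, has⟩ := (IsLocalization.mem_map_algebraMap_iff (nonZeroDivisors R) Q).mp h1
  rw [one_mul] at has
  have : (s : R) = (a : R) := IsFractionRing.injective R Q has
  exact ⟨s, this ▸ a.2, s.2⟩

/-- Stability: a module with an essential torsion submodule is torsion
(when the fraction ring is semisimple). -/
lemma torsion_of_essential (h : IsSemisimpleRing (FractionRing R))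
    {X : Type u} [AddCommGroup X] [Module R X] (D : Submodule R X)
    (hDt : D ≤ Submodule.torsion R X)
    (hDe : ∀ Y : Submodule R X, Y ⊓ D = ⊥ → Y = ⊥) :
    Module.IsTorsion R X := by
  intro x
  set A : Ideal R := (Submodule.torsion R X).comap (LinearMap.toSpanSingleton R X x) with hA
  have hAmem : ∀ r : R, r ∈ A ↔ r • x ∈ Submodule.torsion R X := fun r => Iff.rfl
  have hAe : ∀ B : Ideal R, B ⊓ A = ⊥ → B = ⊥ := by
    intro B hB
    rw [eq_bot_iff]
    intro r hr
    have hrx : r • x = 0 := by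
      by_contra hne
      have hY : Submodule.span R {r • x} ≠ ⊥ := by
        rw [Submodule.ne_bot_iff]
        exact ⟨r • x, Submodule.mem_span_singleton_self _, hne⟩
      have hYD : Submodule.span R {r • x} ⊓ D ≠ ⊥ := fun hbot => hY (hDe _ hbot)
      obtain ⟨y, hy, hyne⟩ := (Submodule.ne_bot_iff _).mp hYD
      obtain ⟨hy1, hy2⟩ := Submodule.mem_inf.mp hy
      obtain ⟨c, hc⟩ := Submodule.mem_span_singleton.mp hy1
      have hcr : c * r ∈ A := by
        rw [hAmem, mul_smul, hc]
        exact hDt hy2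
      have hcrB : c * r ∈ B := B.mul_mem_left c hr
      have : c * r = 0 := by
        have := Submodule.mem_inf.mpr ⟨hcrB, hcr⟩
        rw [hB] at this
        simpa using this
      apply hyne
      rw [← hc, ← mul_smul, this, zero_smul]
    have hrA : r ∈ A := by
      rw [hAmem, hrx]
      exact (Submodule.torsion R X).zero_mem
    have : r ∈ B ⊓ A := Submodule.mem_inf.mpr ⟨hr, hrA⟩
    rw [hB] at this
    simpa using this
  obtain ⟨s, hsA, hs⟩ := essential_ideal_nzd h A hAe
  obtain ⟨u, hu⟩ := (Submodule.mem_torsion_iff _).mp ((hAmem s).mp hsA)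
  refine ⟨⟨(u : R) * s, mul_mem u.2 hs⟩, ?_⟩
  show ((u : R) * s) • x = 0
  rw [mul_smul]
  exact hu

lemma exists_maximal_disjoint {N : Type u} [AddCommGroup N] [Module R N] (D : Submodule R N) :
    ∃ C : Submodule R N, C ⊓ D = ⊥ ∧ ∀ Y : Submodule R N, Y ⊓ D = ⊥ → C ≤ Y → Y = C := by
  classical
  have hchainub : ∀ c ⊆ {C : Submodule R N | C ⊓ D = ⊥},
      IsChain (fun x1 x2 => x1 ≤ x2) c → ∃ ub ∈ {C : Submodule R N | C ⊓ D = ⊥},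
        ∀ z ∈ c, z ≤ ub := by
    intro c hc hchain
    rcases c.eq_empty_or_nonempty with rfl | hne
    · exact ⟨⊥, by simp, by simp⟩
    · refine ⟨sSup c, ?_, fun z hz => le_sSup hz⟩
      rw [Set.mem_setOf_eq, eq_bot_iff]
      intro x hx
      obtain ⟨hx1, hx2⟩ := Submodule.mem_inf.mp hx
      obtain ⟨C, hCc, hxC⟩ := (Submodule.mem_sSup_of_directed hne hchain.directedOn).mp hx1
      have hmem : x ∈ C ⊓ D := Submodule.mem_inf.mpr ⟨hxC, hx2⟩
      rw [hc hCc] at hmem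
      exact hmem
  obtain ⟨m, hm⟩ := zorn_le₀ {C : Submodule R N | C ⊓ D = ⊥} hchainub
  exact ⟨m, hm.prop, fun Y hY hle => le_antisymm (hm.2 hY hle) hle⟩

lemma key_inf_smul (hQ : IsSemisimpleRing (FractionRing R))
    {F M : Type u} [AddCommGroup F] [Module R F] [Module.Projective R F]
    [AddCommGroup M] [Module R M]
    (hB : ∀ (T : Type u) [AddCommGroup T] [Module R T], Module.IsTorsion R T →
      Subsingleton (extGroup R 1 M T))
    (p : F →ₗ[R] M) (hp : Function.Surjective p) (I : Ideal R) :
    LinearMap.ker p ⊓ (I • ⊤ : Submodule R F) ≤ I • (LinearMap.ker p) := by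
  classical
  set K := LinearMap.ker p with hK
  obtain ⟨b, hbI, s, hsS, hbs⟩ := exists_pseudo_idem hQ I
  set IK : Submodule R ↥K := I • ⊤ with hIK
  set D : Submodule R (↥K ⧸ IK) := Submodule.map IK.mkQ
    (Submodule.comap K.subtype (I • (⊤ : Submodule R F))) with hD
  obtain ⟨C, hCD, hCmax⟩ := exists_maximal_disjoint D
  set D' : Submodule R ((↥K ⧸ IK) ⧸ C) := Submodule.map C.mkQ D with hD'
  -- multiplication facts
  have smul_eq : ∀ z ∈ (I • (⊤ : Submodule R F)), s • z = b • z := by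
    intro z hz
    refine Submodule.smul_induction_on hz ?_ ?_
    · intro a ha f _
      rw [smul_smul, smul_smul, ← hbs a ha]
    · intro y z hy hz
      rw [smul_add, smul_add, hy, hz]
  -- D' is killed by s
  have hD's : ∀ d ∈ D', s • d = 0 := by
    intro d hd
    obtain ⟨n, hn, rfl⟩ := hd
    obtain ⟨k, hk, rfl⟩ := hn
    have hsk : s • k = b • k := by
      apply Subtype.ext
      exact smul_eq _ hk
    have hbk : b • k ∈ IK := by
      rw [hIK]
      exact Submodule.smul_mem_smul hbI trivial
    rw [← map_smul, ← map_smul, hsk]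
    have : IK.mkQ (b • k) = 0 := by
      rw [Submodule.mkQ_apply, Submodule.Quotient.mk_eq_zero]
      exact hbk
    rw [this, map_zero]
  -- D' is essential
  have hD'e : ∀ Y : Submodule R ((↥K ⧸ IK) ⧸ C), Y ⊓ D' = ⊥ → Y = ⊥ := by
    intro Y hY
    have hY' : Submodule.comap C.mkQ Y ⊓ D = ⊥ := by
      rw [eq_bot_iff]
      intro n hn
      obtain ⟨hn1, hn2⟩ := Submodule.mem_inf.mp hn
      have hmk : C.mkQ n ∈ Y ⊓ D' := Submodule.mem_inf.mpr ⟨hn1, ⟨n, hn2, rfl⟩⟩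
      rw [hY] at hmk
      have hnC : n ∈ C := by
        rwa [Submodule.mem_bot, Submodule.mkQ_apply, Submodule.Quotient.mk_eq_zero] at hmk
      have : n ∈ C ⊓ D := Submodule.mem_inf.mpr ⟨hnC, hn2⟩
      rw [hCD] at this
      exact this
    have hCle : C ≤ Submodule.comap C.mkQ Y := by
      intro c hc
      have : C.mkQ c = 0 := by
        rw [Submodule.mkQ_apply, Submodule.Quotient.mk_eq_zero]; exact hc
      simp [Submodule.mem_comap, this]
    have hYC : Submodule.comap C.mkQ Y = C := hCmax _ hY' hCle
    have : Y = Submodule.map C.mkQ (Submodule.comap C.mkQ Y) :=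
      (Submodule.map_comap_eq_of_surjective (Submodule.mkQ_surjective C) Y).symm
    rw [this, hYC]
    rw [eq_bot_iff]
    intro y hy
    obtain ⟨c, hc, rfl⟩ := hy
    rw [Submodule.mem_bot, Submodule.mkQ_apply, Submodule.Quotient.mk_eq_zero]
    exact hc
  -- X is torsion
  have hXtor : Module.IsTorsion R ((↥K ⧸ IK) ⧸ C) := by
    refine torsion_of_essential hQ D' ?_ hD'e
    intro d hd
    rw [Submodule.mem_torsion_iff]
    exact ⟨⟨s, hsS⟩, hD's d hd⟩
  -- Baer lifting
  have hExt := hB _ hXtor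
  obtain ⟨ψ, hψ⟩ := bridge hExt p hp (C.mkQ ∘ₗ IK.mkQ)
  -- I • X = ⊥
  have hIX : I • (⊤ : Submodule R ((↥K ⧸ IK) ⧸ C)) = ⊥ := by
    rw [eq_bot_iff]
    refine Submodule.smul_le.mpr ?_
    intro a ha y _
    obtain ⟨n, rfl⟩ := Submodule.mkQ_surjective C y
    obtain ⟨k, rfl⟩ := Submodule.mkQ_surjective IK n
    rw [← map_smul, ← map_smul]
    have : IK.mkQ (a • k) = 0 := by
      rw [Submodule.mkQ_apply, Submodule.Quotient.mk_eq_zero]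
      exact Submodule.smul_mem_smul ha trivial
    simp [this]
  -- conclusion
  intro x hx
  obtain ⟨hx1, hx2⟩ := Submodule.mem_inf.mp hx
  have hψx : ψ x = 0 := by
    have : ψ x ∈ Submodule.map ψ (I • (⊤ : Submodule R F)) :=
      Submodule.mem_map_of_mem hx2
    rw [Submodule.map_smul''] at this
    have hle : I • Submodule.map ψ ⊤ ≤ I • (⊤ : Submodule R ((↥K ⧸ IK) ⧸ C)) :=
      smul_mono_right I le_top
    have := hle this
    rw [hIX] at this
    exact this
  have hφx : C.mkQ (IK.mkQ ⟨x, hx1⟩) = 0 := by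
    have := hψ ⟨x, hx1⟩
    simp only [LinearMap.comp_apply] at this
    rw [← this]
    exact hψx
  have hmem1 : IK.mkQ ⟨x, hx1⟩ ∈ C := by
    rwa [Submodule.mkQ_apply, Submodule.Quotient.mk_eq_zero] at hφx
  have hmem2 : IK.mkQ ⟨x, hx1⟩ ∈ D :=
    ⟨⟨x, hx1⟩, hx2, rfl⟩
  have : IK.mkQ ⟨x, hx1⟩ = 0 := by
    have := Submodule.mem_inf.mpr ⟨hmem1, hmem2⟩
    rw [hCD] at this
    exact this
  have hxIK : (⟨x, hx1⟩ : ↥K) ∈ IK := by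
    rwa [Submodule.mkQ_apply, Submodule.Quotient.mk_eq_zero] at this
  rw [hIK] at hxIK
  exact (Submodule.mem_smul_top_iff I K ⟨x, hx1⟩).mp hxIK

end
end Aux

open TensorProduct

/-- If the total ring of quotients of `R` is semisimple and `M` is a Baer `R`-module
(`Ext^1_R(M, T) = 0` for every torsion module `T`), then `M` is flat. -/
theorem stmt9 (R : Type u) [CommRing R] (h : IsSemisimpleRing (FractionRing R))
    (M : Type u) [AddCommGroup M] [Module R M]
    (hB : ∀ (T : Type u) [AddCommGroup T] [Module R T], Module.IsTorsion R T →
      Subsingleton (extGroup R 1 M T)) :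
    Module.Flat R M := by
  classical
  rw [Module.Flat.iff_lift_lsmul_comp_subtype_injective]
  intro I hI
  set F := (M →₀ R) with hF
  set p : F →ₗ[R] M := Finsupp.linearCombination R _root_.id with hpdef
  have hp : Function.Surjective p :=
    Finsupp.linearCombination_surjective R Function.surjective_id
  set K := LinearMap.ker p with hK
  have key := key_inf_smul h hB p hp I
  set μM := TensorProduct.lift ((LinearMap.lsmul R M).comp I.subtype) with hμM
  set μF := TensorProduct.lift ((LinearMap.lsmul R F).comp I.subtype) with hμF
  rw [injective_iff_map_eq_zero]
  intro z hz
  obtain ⟨w, rfl⟩ := LinearMap.lTensor_surjective ↥I hp z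
  have hcomm : p (μF w) = μM (LinearMap.lTensor ↥I p w) := by
    have : p ∘ₗ μF = μM ∘ₗ LinearMap.lTensor ↥I p := by
      apply TensorProduct.ext'
      intro a f
      simp [hμM, hμF]
    exact DFunLike.congr_fun this w
  have hker : μF w ∈ K := by
    rw [hK, LinearMap.mem_ker, hcomm, hz]
  have hIFall : ∀ u : ↥I ⊗[R] F, μF u ∈ I • (⊤ : Submodule R F) := by
    intro u
    induction u using TensorProduct.induction_on with
    | zero => simp only [map_zero]; exact Submodule.zero_mem _
    | tmul a f => simpa [hμF] using Submodule.smul_mem_smul a.2 (Submodule.mem_top (x := f))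
    | add u v hu hv => rw [map_add]; exact Submodule.add_mem _ hu hv
  have hIF : μF w ∈ I • (⊤ : Submodule R F) := hIFall w
  have hIK : μF w ∈ I • K := key (Submodule.mem_inf.mpr ⟨hker, hIF⟩)
  set ν : ↥I ⊗[R] ↥K →ₗ[R] F := μF ∘ₗ LinearMap.lTensor ↥I K.subtype with hν
  have hrange : I • K ≤ LinearMap.range ν := by
    refine Submodule.smul_le.mpr ?_
    intro a ha k hk
    exact ⟨(⟨a, ha⟩ : ↥I) ⊗ₜ (⟨k, hk⟩ : ↥K), by simp [hν, hμF]⟩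
  obtain ⟨v, hv⟩ := hrange hIK
  have hFflat : Module.Flat R F := inferInstance
  have hinj : Function.Injective μF := (Module.Flat.iff_lift_lsmul_comp_subtype_injective (R := R) (M := F)).mp hFflat hI
  have hweq : w = LinearMap.lTensor ↥I K.subtype v := by
    apply hinj
    rw [← hv]
    rfl
  rw [hweq, ← LinearMap.lTensor_comp_apply]
  have hcomp : p ∘ₗ K.subtype = 0 := by
    apply LinearMap.ext
    intro k
    exact k.2
  rw [hcomp]
  simp
end

section
/- Let R be a commutative ring, M a Baer R-module of projective dimension at most 1, and N a submodule of M with pd_R(M/N) ≤ 1 (a tight submodule). Then N is a Baer module. -/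
/-!
Write `M` as a quotient `F ⧸ S` of a free module. Since `pd (M ⧸ N) ≤ 1`, Schanuel's lemma makes
the preimage `G` of `N` in `F` projective, so `0 → S → G → N → 0` is a projective presentation
of `N`. For any projective presentation `0 → K → P → X → 0`, `Ext¹(X, T) = 0` says exactly that
every map `K → T` extends to `P`. As `M` is Baer, every map `S → T` extends to `F`, hence to `G`.
-/

open CategoryTheory

universe u

open Function LinearMap

section LinearAlgebra

variable {R : Type*} [Ring R] {M : Type*} [AddCommGroup M] [Module R M]

namespace Submodule

def ExtendsHoms (K : Submodule R M) (Y : Type*) [AddCommGroup Y] [Module R Y] : Prop :=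
  ∀ φ : K →ₗ[R] Y, ∃ ψ : M →ₗ[R] Y, ψ ∘ₗ K.subtype = φ

variable {Y : Type*} [AddCommGroup Y] [Module R Y]

theorem ExtendsHoms.comap_subtype {K L : Submodule R M} (hK : K.ExtendsHoms Y) (hKL : K ≤ L) :
    (K.comap L.subtype).ExtendsHoms Y := by
  intro φ
  obtain ⟨ψ, hψ⟩ := hK (φ ∘ₗ (comapSubtypeEquivOfLe hKL).symm.toLinearMap)
  refine ⟨ψ ∘ₗ L.subtype, LinearMap.ext fun x => ?_⟩
  simpa using LinearMap.congr_fun hψ (comapSubtypeEquivOfLe hKL x)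

end Submodule

variable {Y : Type*} [AddCommGroup Y] [Module R Y]

theorem LinearMap.forall_comp_eq_zero_iff_extendsHoms_range {A B C : Type*}
    [AddCommGroup A] [Module R A] [AddCommGroup B] [Module R B] [AddCommGroup C] [Module R C]
    (d : A →ₗ[R] B) (e : C →ₗ[R] A) (hde : range e = ker d) :
    (∀ f : A →ₗ[R] Y, f ∘ₗ e = 0 → ∃ g : B →ₗ[R] Y, g ∘ₗ d = f) ↔ (range d).ExtendsHoms Y := by
  have hde' : d ∘ₗ e = 0 := by
    ext c; exact (hde ▸ mem_range_self e c : e c ∈ ker d)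
  constructor
  · intro h φ
    obtain ⟨g, hg⟩ := h (φ ∘ₗ d.rangeRestrict) (by
      ext c
      change φ (d.rangeRestrict (e c)) = 0
      rw [show d.rangeRestrict (e c) = 0 from Subtype.ext (LinearMap.congr_fun hde' c), map_zero])
    refine ⟨g, LinearMap.ext ?_⟩
    rintro ⟨_, a, rfl⟩
    exact LinearMap.congr_fun hg a
  · intro h f hf
    have hker : ker d ≤ ker f := by
      rw [← hde]; rintro _ ⟨c, rfl⟩; exact LinearMap.congr_fun hf c
    obtain ⟨g, hg⟩ := h ((ker d).liftQ f hker ∘ₗ d.quotKerEquivRange.symm.toLinearMap)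
    refine ⟨g, LinearMap.ext fun a => ?_⟩
    simpa [quotKerEquivRange_symm_apply_image] using LinearMap.congr_fun hg ⟨d a, mem_range_self d a⟩

theorem Submodule.ExtendsHoms.ker_of_surjective {X P P' : Type*}
    [AddCommGroup X] [Module R X] [AddCommGroup P] [Module R P] [AddCommGroup P'] [Module R P']
    [Module.Projective R P] [Module.Projective R P'] {p : P →ₗ[R] X} {p' : P' →ₗ[R] X}
    (hp : Surjective p) (hp' : Surjective p') (h : (ker p').ExtendsHoms Y) :
    (ker p).ExtendsHoms Y := by
  intro φ
  obtain ⟨α, hα⟩ := Module.projective_lifting_property p' p hp'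
  obtain ⟨β, hβ⟩ := Module.projective_lifting_property p p' hp
  have hαβ : ∀ x, p (β (α x)) = p x := fun x => by
    rw [← LinearMap.comp_apply p β, hβ, ← LinearMap.comp_apply p' α, hα]
  let γ : P →ₗ[R] ker p :=
    codRestrict _ (LinearMap.id - β ∘ₗ α) fun x => by simp [hαβ]
  obtain ⟨ψ', hψ'⟩ := h (φ ∘ₗ β.restrict fun x hx => by
    simp only [mem_ker] at hx ⊢; rw [← LinearMap.comp_apply p β, hβ, hx])
  refine ⟨ψ' ∘ₗ α + φ ∘ₗ γ, LinearMap.ext fun x => ?_⟩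
  have hαx : α x ∈ ker p' := by
    rw [mem_ker, ← LinearMap.comp_apply p' α, hα]; exact x.2
  have := LinearMap.congr_fun hψ' ⟨α x, hαx⟩
  simp only [LinearMap.comp_apply, LinearMap.add_apply, Submodule.subtype_apply] at this ⊢
  rw [this, ← map_add]
  congr 1
  ext
  simp [γ]

theorem Module.Projective.quotient_of_extendsHoms {K : Submodule R M} [Module.Projective R M]
    (h : K.ExtendsHoms K) : Module.Projective R (M ⧸ K) := by
  have hsplit := (LinearMap.exact_subtype_mkQ K).split_tfae K.injective_subtype K.mkQ_surjective
  obtain ⟨s, hs⟩ := (hsplit.out 0 1).2 (h LinearMap.id)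
  exact .of_split s K.mkQ hs

/-- Schanuel's lemma: `0 → ker p → P × ker p' → P' → 0` is exact and splits. -/
theorem Module.Projective.ker_of_surjective {X P P' : Type*}
    [AddCommGroup X] [Module R X] [AddCommGroup P] [Module R P] [AddCommGroup P'] [Module R P']
    [Module.Projective R P] [Module.Projective R P'] {p : P →ₗ[R] X} {p' : P' →ₗ[R] X}
    (hp : Surjective p) (hp' : Surjective p') (hK : Module.Projective R (ker p')) :
    Module.Projective R (ker p) := by
  obtain ⟨α, hα⟩ := Module.projective_lifting_property p' p hp'
  have hαk : ∀ x ∈ ker p, -α x ∈ ker p' := fun x hx => by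
    simp only [mem_ker, map_neg, neg_eq_zero] at hx ⊢
    rw [← LinearMap.comp_apply p' α, hα, hx]
  let f : ker p →ₗ[R] P × ker p' := (ker p).subtype.prod ((-α).restrict hαk)
  let g : P × ker p' →ₗ[R] P' := α.coprod (ker p').subtype
  have hg : Surjective g := fun y => by
    obtain ⟨x, hx⟩ := hp (p' y)
    refine ⟨(x, ⟨y - α x, ?_⟩), by simp [g]⟩
    rw [mem_ker, map_sub, ← LinearMap.comp_apply p' α, hα, hx, sub_self]
  have hfg : Exact f g := fun y => by
    constructor
    · intro hy
      have hk : (y.2 : P') = -α y.1 := eq_neg_of_add_eq_zero_right hy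
      have hx : y.1 ∈ ker p := by
        rw [mem_ker, ← hα, LinearMap.comp_apply, ← neg_eq_zero, ← map_neg, ← hk]
        exact y.2.2
      exact ⟨⟨y.1, hx⟩, Prod.ext rfl (Subtype.ext hk.symm)⟩
    · rintro ⟨x, rfl⟩
      simp [f, g]
  have hsplit := hfg.split_tfae (fun a b hab => Subtype.ext (congrArg Prod.fst hab)) hg
  obtain ⟨r, hr⟩ := (hsplit.out 0 1).1 (g.exists_rightInverse_of_surjective (range_eq_top.2 hg))
  exact .of_split f r hr

end LinearAlgebra

section Resolution

variable {R : Type u} [CommRing R] {X : ModuleCat.{u} R} (P : ProjectiveResolution X)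
  (Y : ModuleCat.{u} R)

theorem CategoryTheory.ProjectiveResolution.subsingleton_ext_succ_iff (n : ℕ) :
    Subsingleton (((Ext R (ModuleCat.{u} R) (n + 1)).obj (Opposite.op X)).obj Y) ↔
    ∀ f : P.complex.X (n + 1) →ₗ[R] Y, f ∘ₗ (P.complex.d (n + 2) (n + 1)).hom = 0 →
      ∃ g : P.complex.X n →ₗ[R] Y, g ∘ₗ (P.complex.d (n + 1) n).hom = f := by
  rw [← ModuleCat.isZero_iff_subsingleton, (P.isoExt (n + 1) Y).isZero_iff,
    ← HomologicalComplex.exactAt_iff_isZero_homology,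
    HomologicalComplex.exactAt_iff' _ n (n + 1) (n + 2) (by simp) (by simp),
    ShortComplex.moduleCat_exact_iff]
  constructor
  · intro h f hf
    obtain ⟨g, hg⟩ := h (ModuleCat.ofHom f) (ModuleCat.hom_ext hf)
    exact ⟨g.hom, congrArg ModuleCat.Hom.hom hg⟩
  · intro h f hf
    obtain ⟨g, hg⟩ := h f.hom (congrArg ModuleCat.Hom.hom hf)
    exact ⟨ModuleCat.ofHom g, ModuleCat.hom_ext hg⟩

theorem CategoryTheory.ProjectiveResolution.subsingleton_ext_succ_iff_extendsHoms (n : ℕ) :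
    Subsingleton (((Ext R (ModuleCat.{u} R) (n + 1)).obj (Opposite.op X)).obj Y) ↔
    (range (P.complex.d (n + 1) n).hom).ExtendsHoms Y :=
  (P.subsingleton_ext_succ_iff Y n).trans <|
    forall_comp_eq_zero_iff_extendsHoms_range _ _ (P.exact_succ n).moduleCat_range_eq_ker

theorem CategoryTheory.ProjectiveResolution.surjective_π_zero : Surjective (P.π.f 0).hom :=
  (ModuleCat.epi_iff_surjective _).1 inferInstance

end Resolution

section Presentation

variable {R : Type u} [CommRing R] {X P : Type u} [AddCommGroup X] [Module R X]
  [AddCommGroup P] [Module R P] [Module.Projective R P] {p : P →ₗ[R] X}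

theorem subsingleton_extGroup_one_iff (Y : Type u) [AddCommGroup Y] [Module R Y]
    (hp : Surjective p) : Subsingleton (extGroup R 1 X Y) ↔ (ker p).ExtendsHoms Y := by
  let Q := ProjectiveResolution.of (ModuleCat.of R X)
  rw [Q.subsingleton_ext_succ_iff_extendsHoms, Q.exact₀.moduleCat_range_eq_ker]
  exact ⟨.ker_of_surjective hp Q.surjective_π_zero, .ker_of_surjective Q.surjective_π_zero hp⟩

theorem Module.Projective.ker_of_subsingleton_extGroup_two
    (h : ∀ (Z : Type u) [AddCommGroup Z] [Module R Z], Subsingleton (extGroup R 2 X Z))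
    (hp : Surjective p) : Module.Projective R (ker p) := by
  let Q := ProjectiveResolution.of (ModuleCat.of R X)
  let d := (Q.complex.d 1 0).hom
  -- `Ext² = 0` splits `ker d ↪ P₁`, so `ker π₀ = range d ≅ P₁ ⧸ ker d` is projective.
  have hd : (ker d).ExtendsHoms (ker d) := by
    have := (Q.subsingleton_ext_succ_iff_extendsHoms (ModuleCat.of R (ker d)) 1).1 (h (ker d))
    rwa [(Q.exact_succ 0).moduleCat_range_eq_ker] at this
  refine .ker_of_surjective hp Q.surjective_π_zero ?_
  change Module.Projective R (ker (Q.π.f 0).hom)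
  rw [← Q.exact₀.moduleCat_range_eq_ker]
  have := Module.Projective.quotient_of_extendsHoms hd
  exact .of_equiv' d.quotKerEquivRange

end Presentation

theorem stmt11_general (R : Type u) [CommRing R]
    (M : Type u) [AddCommGroup M] [Module R M]
    (hBaer : ∀ (T : Type u) [AddCommGroup T] [Module R T], Module.IsTorsion R T →
      Subsingleton (extGroup R 1 M T))
    (N : Submodule R M)
    (hpdQ : ∀ (X : Type u) [AddCommGroup X] [Module R X],
      Subsingleton (extGroup R 2 (M ⧸ N) X)) :
    ∀ (T : Type u) [AddCommGroup T] [Module R T], Module.IsTorsion R T →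
      Subsingleton (extGroup R 1 N T) := by
  intro T _ _ hT
  let π := Finsupp.linearCombination R (id : M → M)
  have hπ : Surjective π := Finsupp.linearCombination_id_surjective R M
  have : Module.Projective R (N.comap π) := by
    have := Module.Projective.ker_of_subsingleton_extGroup_two hpdQ
      (p := N.mkQ ∘ₗ π) (N.mkQ_surjective.comp hπ)
    rwa [ker_comp, Submodule.ker_mkQ] at this
  let ρ : N.comap π →ₗ[R] N := π.restrict fun _ h => h
  have hρ : Surjective ρ := by
    rintro ⟨n, hn⟩
    obtain ⟨x, rfl⟩ := hπ n
    exact ⟨⟨x, hn⟩, rfl⟩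
  rw [subsingleton_extGroup_one_iff (P := N.comap π) T hρ, ker_restrict]
  exact ((subsingleton_extGroup_one_iff T hπ).1 (hBaer T hT)).comap_subtype
    (Submodule.comap_mono bot_le)

/-- A tight submodule of a Baer module is Baer: if `M` is Baer of projective
dimension `≤ 1` and `N ≤ M` with `pd_R (M/N) ≤ 1`, then `N` is Baer. -/
theorem stmt11 (R : Type u) [CommRing R]
    (M : Type u) [AddCommGroup M] [Module R M]
    (hBaer : ∀ (T : Type u) [AddCommGroup T] [Module R T], Module.IsTorsion R T →
      Subsingleton (extGroup R 1 M T))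
    (hpdM : ∀ (X : Type u) [AddCommGroup X] [Module R X], Subsingleton (extGroup R 2 M X))
    (N : Submodule R M)
    (hpdQ : ∀ (X : Type u) [AddCommGroup X] [Module R X],
      Subsingleton (extGroup R 2 (M ⧸ N) X)) :
    ∀ (T : Type u) [AddCommGroup T] [Module R T], Module.IsTorsion R T →
      Subsingleton (extGroup R 1 N T) :=
  stmt11_general R M hBaer N hpdQ
end

section
/- Let R be a commutative ring and B an R-module of projective dimension at most 1. If Ext^1_R(B, T) = 0 for every R-module T that is a direct sum of copies of ⨁_{r ∈ Reg(R)} R/rR, then B is a Baer module, i.e., Ext^1_R(B, N) = 0 for every torsion R-module N. -/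
open CategoryTheory

universe u

/-- `⨁_{r ∈ Reg(R)} R/rR`. -/
abbrev T0 (R : Type u) [CommRing R] : Type u :=
  DirectSum (nonZeroDivisors R) fun r => R ⧸ Ideal.span {(r : R)}

section Helpers

variable {R : Type u} [CommRing R]

lemma ext_subsingleton_iff {M : ModuleCat.{u} R} (P : ProjectiveResolution M)
    (Y : ModuleCat.{u} R) (n : ℕ) :
    Subsingleton (((Ext R (ModuleCat.{u} R) n).obj (Opposite.op M)).obj Y) ↔
      (P.complex.linearYonedaObj R Y).ExactAt n := by
  rw [HomologicalComplex.exactAt_iff_isZero_homology]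
  constructor
  · intro h
    exact Limits.IsZero.of_iso (ModuleCat.isZero_of_subsingleton _) (P.isoExt n Y).symm
  · intro h
    have h2 := Limits.IsZero.of_iso h (P.isoExt n Y)
    rw [Limits.IsZero.iff_id_eq_zero] at h2
    constructor
    intro a b
    have : ∀ x : (((Ext R (ModuleCat.{u} R) n).obj (Opposite.op M)).obj Y),
        ModuleCat.Hom.hom (𝟙 (((Ext R (ModuleCat.{u} R) n).obj (Opposite.op M)).obj Y)) x = x := fun _ => rfl
    rw [← this a, ← this b, h2]
    rfl

lemma yoneda_exactAt_iff (K : ChainComplex (ModuleCat.{u} R) ℕ) (Y : ModuleCat.{u} R) (n : ℕ) :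
    (K.linearYonedaObj R Y).ExactAt (n + 1) ↔
      ∀ f : K.X (n + 1) ⟶ Y, K.d (n + 2) (n + 1) ≫ f = 0 →
        ∃ g : K.X n ⟶ Y, K.d (n + 1) n ≫ g = f := by
  rw [HomologicalComplex.exactAt_iff' _ n (n + 1) (n + 2) (by simp) (by simp),
    ShortComplex.moduleCat_exact_iff]
  simp only [HomologicalComplex.shortComplexFunctor'_obj_g,
    HomologicalComplex.shortComplexFunctor'_obj_f,
    ChainComplex.linearYonedaObj_d, ChainComplex.linearYonedaObj_X,
    ModuleCat.hom_ofHom, Linear.leftComp_apply]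
  constructor
  · intro h f hf
    obtain ⟨g, hg⟩ := h f hf
    exact ⟨g, hg⟩
  · intro h f hf
    obtain ⟨g, hg⟩ := h f hf
    exact ⟨g, hg⟩

lemma torsion_surj (N : Type u) [AddCommGroup N] [Module R N] (hN : Module.IsTorsion R N) :
    ∃ Φ : (DirectSum N fun _ => T0 R) →ₗ[R] N, Function.Surjective Φ := by
  classical
  have hN' : ∀ x : N, ∃ a : nonZeroDivisors R, a • x = 0 := fun x => @hN x
  choose r hr using hN'
  have hker : ∀ n : N, Ideal.span {(r n : R)} ≤ LinearMap.ker (LinearMap.toSpanSingleton R N n) := by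
    intro n
    rw [Ideal.span_le, Set.singleton_subset_iff]
    simpa [LinearMap.toSpanSingleton, LinearMap.mem_ker] using (Submonoid.smul_def (r n) n).symm.trans (hr n)
  let ψ : ∀ n : N, T0 R →ₗ[R] N := fun n =>
    (Submodule.liftQ _ (LinearMap.toSpanSingleton R N n) (hker n)).comp
      (DirectSum.component R (nonZeroDivisors R) (fun s => R ⧸ Ideal.span {(s : R)}) (r n))
  refine ⟨DirectSum.toModule R N N ψ, fun n => ?_⟩
  refine ⟨DirectSum.lof R N (fun _ => T0 R) n
    (DirectSum.lof R (nonZeroDivisors R) (fun s => R ⧸ Ideal.span {(s : R)}) (r n)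
      (Submodule.Quotient.mk 1)), ?_⟩
  rw [DirectSum.toModule_lof]
  simp only [ψ, LinearMap.comp_apply, DirectSum.component.lof_self]
  have : ((Submodule.liftQ (Ideal.span {(r n : R)}) (LinearMap.toSpanSingleton R N n)
      (hker n)) (Submodule.Quotient.mk 1)) = n := by
    rw [Submodule.liftQ_apply]; simp
  simpa using this

lemma complex_exact_concrete {M : ModuleCat.{u} R} (P : ProjectiveResolution M) :
    ∀ x : P.complex.X 1, P.complex.d 1 0 x = 0 → ∃ y, P.complex.d 2 1 y = x := by
  have h := P.complex_exactAt_succ 0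
  rw [HomologicalComplex.exactAt_iff' _ 2 1 0 (by simp) (by simp),
    ShortComplex.moduleCat_exact_iff] at h
  exact h

end Helpers

/-- Let `B` be a module of projective dimension `≤ 1`. If `Ext^1_R(B, T) = 0`
for every direct sum `T` of copies of `⨁_{r ∈ Reg(R)} R/rR`, then `B` is a Baer
module, i.e. `Ext^1_R(B, N) = 0` for every torsion module `N`. -/
theorem stmt12 (R : Type u) [CommRing R]
    (B : Type u) [AddCommGroup B] [Module R B]
    (hpd : ∀ (X : Type u) [AddCommGroup X] [Module R X], Subsingleton (extGroup R 2 B X))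
    (hT : ∀ (ι : Type u), Subsingleton (extGroup R 1 B (DirectSum ι fun _ => T0 R))) :
    ∀ (N : Type u) [AddCommGroup N] [Module R N], Module.IsTorsion R N →
      Subsingleton (extGroup R 1 B N) := by
  intro N _ _ hN
  classical
  obtain ⟨Φ, hΦ⟩ := torsion_surj N hN
  obtain ⟨P⟩ := (inferInstance : HasProjectiveResolution (ModuleCat.of R B)).out
  refine (ext_subsingleton_iff P (ModuleCat.of R N) 1).mpr
    ((yoneda_exactAt_iff P.complex (ModuleCat.of R N) 0).mpr ?_)
  intro f hf
  -- the kernel of d 1 0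
  set L : Submodule R (P.complex.X 1) := LinearMap.ker (P.complex.d 1 0).hom with hL
  -- d 2 1 corestricted to L
  have hmem : ∀ x : P.complex.X 2, P.complex.d 2 1 x ∈ L := by
    intro x
    have h21 : P.complex.d 2 1 ≫ P.complex.d 1 0 = 0 := P.complex.d_comp_d 2 1 0
    show P.complex.d 2 1 x ∈ L
    rw [hL, LinearMap.mem_ker]
    exact congrArg (fun g => g x) h21
  let hmap : P.complex.X 2 ⟶ ModuleCat.of R ↥L :=
    ModuleCat.ofHom (LinearMap.codRestrict L (P.complex.d 2 1).hom hmem)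
  have h2 := (yoneda_exactAt_iff P.complex (ModuleCat.of R ↥L) 1).mp
    ((ext_subsingleton_iff P (ModuleCat.of R ↥L) 2).mp (hpd ↥L))
  obtain ⟨k, hk⟩ := h2 hmap (by
    apply ModuleCat.hom_ext
    apply LinearMap.ext
    intro x
    apply Subtype.ext
    have h32 : P.complex.d 3 2 ≫ P.complex.d 2 1 = 0 := P.complex.d_comp_d 3 2 1
    exact congrArg (fun g => g x) h32)
  -- f vanishes on L
  have hfL : ∀ x : P.complex.X 1, x ∈ L → f x = 0 := by
    intro x hx
    obtain ⟨y, rfl⟩ := complex_exact_concrete P x hx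
    simpa using congrArg (fun g => g y) hf
  -- lift f through Φ
  let F : ModuleCat.{u} R := ModuleCat.of R (DirectSum N fun _ => T0 R)
  let ΦM : F ⟶ ModuleCat.of R N := ModuleCat.ofHom Φ
  have : Epi ΦM := (ModuleCat.epi_iff_surjective ΦM).mpr hΦ
  let f0 : P.complex.X 1 ⟶ F := Projective.factorThru f ΦM
  have hf0 : f0 ≫ ΦM = f := Projective.factorThru_comp f ΦM
  let f'' : P.complex.X 1 ⟶ F := f0 - (k ≫ ModuleCat.ofHom L.subtype ≫ f0)
  have hsub : hmap ≫ ModuleCat.ofHom L.subtype = P.complex.d 2 1 := rfl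
  have hc : P.complex.d 2 1 ≫ f'' = 0 := by
    simp only [f'', Preadditive.comp_sub]
    rw [← Category.assoc (P.complex.d 2 1) k, hk, ← Category.assoc, hsub, sub_self]
  have h1 := (yoneda_exactAt_iff P.complex F 0).mp
    ((ext_subsingleton_iff P F 1).mp (hT N))
  obtain ⟨g', hg'⟩ := h1 f'' hc
  refine ⟨g' ≫ ΦM, ?_⟩
  rw [← Category.assoc, hg']
  have hLf : ModuleCat.ofHom L.subtype ≫ f = 0 := by
    apply ModuleCat.hom_ext
    apply LinearMap.ext
    intro x
    exact hfL x.1 x.2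
  simp only [f'', Preadditive.sub_comp, Category.assoc, hf0, hLf, Limits.comp_zero, sub_zero]
end

section
/- Let R be a commutative ring, and let N be an R-module. Define E = {e ∈ E(N) : re ∈ N for some non-zero-divisor r of R}, where E(N) is the injective envelope of N. Then E/N is a torsion R-module and Ext^1_R(R/I, E) = 0 for every regular ideal I of R. -/
open CategoryTheory

universe u

noncomputable section Aux

open Limits Projective

section Res

universe v u'
variable {C : Type u'} [Category.{v} C] [Abelian C] [EnoughProjectives C]
variable {Z P₀ : C} (e : P₀ ⟶ Z)

/-- Variant of `ProjectiveResolution.ofComplex` starting from a chosen epi. -/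
def ofComplex' : ChainComplex C ℕ :=
  ChainComplex.mk' P₀ (syzygies e) (d e) (fun f => ⟨_, d f, by erw [Category.assoc, kernel.condition, comp_zero]⟩)

lemma ofComplex'_d_1_0 : (ofComplex' e).d 1 0 = d e := by
  simp [ofComplex']

lemma ofComplex'_d_2_1 : (ofComplex' e).d 2 1 = d (d e) :=
  ChainComplex.mk_d_2_1 _ _ _ _ _ _ _

lemma ofComplex'_exactAt_succ (n : ℕ) :
    (ofComplex' e).ExactAt (n + 1) := by
  rw [HomologicalComplex.exactAt_iff' _ (n + 1 + 1) (n + 1) n (by simp) (by simp)]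
  refine (ShortComplex.exact_iff_of_iso ?_).2 (exact_d_f ((ofComplex' e).d (n + 1) n))
  exact ShortComplex.isoMk (ChainComplex.mk'XIso P₀ (syzygies e) (d e)
    (fun f => ⟨_, d f, by erw [Category.assoc, kernel.condition, comp_zero]⟩) n) (Iso.refl _) (Iso.refl _)
    (by erw [Category.comp_id]; exact (ChainComplex.mk'_d _ _ _ _ n).symm)
    (by erw [Category.id_comp, Category.comp_id]; rfl)

instance [Projective P₀] (n : ℕ) : Projective ((ofComplex' e).X n) := by
  obtain (_ | _ | _ | n) := n <;> first | (exact ‹_›) | apply Projective.projective_over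

/-- A projective resolution built from a chosen epimorphism out of a projective object. -/
def resolutionOfEpi [Projective P₀] [Epi e] : ProjectiveResolution Z where
  complex := ofComplex' e
  π := (ChainComplex.toSingle₀Equiv _ _).symm ⟨e, by
          erw [ofComplex'_d_1_0, Category.assoc, kernel.condition, comp_zero]⟩
  quasiIso := ⟨fun n => by
    cases n
    · rw [ChainComplex.quasiIsoAt₀_iff, ShortComplex.quasiIso_iff_of_zeros']
      · refine (ShortComplex.exact_and_epi_g_iff_of_iso ?_).2
          ⟨exact_d_f e, by dsimp; infer_instance⟩
        exact ShortComplex.isoMk (Iso.refl _) (Iso.refl _) (Iso.refl _)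
          (by erw [Category.id_comp, Category.comp_id]; exact (ofComplex'_d_1_0 e).symm) (by erw [Category.id_comp, Category.comp_id]; exact (ChainComplex.toSingle₀Equiv_symm_apply_f_zero (C := ofComplex' e) e _).symm)
      all_goals rfl
    · rw [quasiIsoAt_iff_exactAt']
      · apply ofComplex'_exactAt_succ
      · apply ChainComplex.exactAt_succ_single_obj⟩

end Res

section Glue

variable {R : Type u} [CommRing R]

lemma subsingleton_of_isZero {X : ModuleCat.{u} R} (h : IsZero X) : Subsingleton X :=
  ⟨fun a b => by
    have h1 : (𝟙 X : X ⟶ X) = 0 := h.eq_of_src _ _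
    have ha : (𝟙 X : X ⟶ X) a = (0 : X ⟶ X) a := by rw [h1]
    have hb : (𝟙 X : X ⟶ X) b = (0 : X ⟶ X) b := by rw [h1]
    simpa using ha.trans hb.symm⟩

lemma ext_one_subsingleton {Z Y : ModuleCat.{u} R} (P : ProjectiveResolution Z)
    (hex : ((P.complex.linearYonedaObj R Y).sc' 0 1 2).Exact) :
    Subsingleton (((Ext R (ModuleCat.{u} R) 1).obj (Opposite.op Z)).obj Y) := by
  have h1 : (P.complex.linearYonedaObj R Y).ExactAt 1 := by
    rw [HomologicalComplex.exactAt_iff' _ 0 1 2 (by simp) (by simp)]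
    exact hex
  rw [HomologicalComplex.exactAt_iff_isZero_homology] at h1
  exact subsingleton_of_isZero (IsZero.of_iso h1 (P.isoExt 1 Y))

end Glue

section Key

variable {R : Type u} [CommRing R] {Q : Type u} [AddCommGroup Q] [Module R Q]

/-- The key module-theoretic extension step: a map into `E` defined on a module
surjecting (essentially) onto an ideal containing a non-zero-divisor extends to `R`. -/
lemma key_extend (hQ : Module.Injective R Q) (N : Submodule R Q)
    (E : Submodule R Q) (hE : E = Submodule.comap N.mkQ (Submodule.torsion R (Q ⧸ N)))
    {X1 : Type u} [AddCommGroup X1] [Module R X1]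
    (d : X1 →ₗ[R] R) (f : X1 →ₗ[R] E) (hker : LinearMap.ker d ≤ LinearMap.ker f)
    {r : R} (hr : r ∈ LinearMap.range d) (hnzd : r ∈ nonZeroDivisors R) :
    ∃ g : R →ₗ[R] E, g ∘ₗ d = f := by
  -- factor `E.subtype ∘ f` through the range of `d`
  set fl : (X1 ⧸ LinearMap.ker d) →ₗ[R] Q :=
    Submodule.liftQ _ (E.subtype ∘ₗ f) (fun x hx => by
      simp [LinearMap.mem_ker.mp (hker hx)]) with hfl
  set φ : LinearMap.range d →ₗ[R] Q :=
    fl ∘ₗ ((LinearMap.quotKerEquivRange d).symm : LinearMap.range d →ₗ[R] _) with hφ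
  obtain ⟨h, hh⟩ := hQ.out (LinearMap.range d).subtype (Submodule.injective_subtype _) φ
  have hφd : ∀ x : X1, φ ⟨d x, LinearMap.mem_range_self d x⟩ = (f x : Q) := by
    intro x
    have : (LinearMap.quotKerEquivRange d).symm ⟨d x, LinearMap.mem_range_self d x⟩ =
        Submodule.Quotient.mk x := LinearMap.quotKerEquivRange_symm_apply_image d x _
    simp [hφ, this, hfl]
  have hhd : ∀ x : X1, h (d x) = (f x : Q) := fun x => by
    have := hh ⟨d x, LinearMap.mem_range_self d x⟩
    simpa [hφd x] using this
  -- h 1 lies in E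
  set q : Q := h 1 with hq
  have hrq : r • q ∈ E := by
    obtain ⟨x, hx⟩ := hr
    have : h r = (f x : Q) := by rw [← hx]; exact hhd x
    have hrq' : r • q = (f x : Q) := by
      rw [hq, ← map_smul, smul_eq_mul, mul_one, this]
    rw [hrq']; exact (f x).2
  have hqE : q ∈ E := by
    rw [hE] at hrq ⊢
    simp only [Submodule.mem_comap] at hrq ⊢
    rw [Submodule.mem_torsion'_iff] at hrq ⊢
    obtain ⟨⟨s, hs⟩, hsr⟩ := hrq
    refine ⟨⟨s * r, mul_mem hs hnzd⟩, ?_⟩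
    simpa [Submonoid.mk_smul, mul_smul, map_smul] using hsr
  have hmem : ∀ y : R, h y ∈ E := fun y => by
    have : h y = y • q := by rw [hq, ← map_smul, smul_eq_mul, mul_one]
    rw [this]; exact E.smul_mem y hqE
  refine ⟨LinearMap.codRestrict E h hmem, ?_⟩
  ext x
  simpa [LinearMap.codRestrict_apply] using hhd x

end Key

end Aux

/-- Let `N` be a submodule of an injective envelope `Q` (an injective module in
which `N` is essential), and set `E = {e ∈ Q : r • e ∈ N for some non-zero-divisor r}`.
Then `E/N` is torsion and `Ext^1_R(R/I, E) = 0` for every regular ideal `I`. -/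
theorem stmt13 (R : Type u) [CommRing R]
    (Q : Type u) [AddCommGroup Q] [Module R Q] (hQ : Module.Injective R Q)
    (N : Submodule R Q)
    (hess : ∀ P : Submodule R Q, P ⊓ N = ⊥ → P = ⊥)
    (E : Submodule R Q)
    (hE : E = Submodule.comap N.mkQ (Submodule.torsion R (Q ⧸ N))) :
    Module.IsTorsion R (E ⧸ Submodule.comap E.subtype N) ∧
      ∀ I : Ideal R, (∃ r ∈ I, r ∈ nonZeroDivisors R) →
        Subsingleton (extGroup R 1 (R ⧸ I) E) := by
  constructor
  · -- torsion part
    intro x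
    obtain ⟨e, rfl⟩ := Submodule.Quotient.mk_surjective _ x
    have he : (e : Q) ∈ Submodule.comap N.mkQ (Submodule.torsion R (Q ⧸ N)) := by
      rw [← hE]; exact e.2
    rw [Submodule.mem_comap, Submodule.mem_torsion'_iff] at he
    obtain ⟨⟨s, hs⟩, hsr⟩ := he
    refine ⟨⟨s, hs⟩, ?_⟩
    have hsN : s • (e : Q) ∈ N := by
      have : N.mkQ (s • (e : Q)) = 0 := by
        simpa [Submonoid.mk_smul, map_smul] using hsr
      simpa [← Submodule.Quotient.mk_eq_zero N] using this
    rw [Submonoid.mk_smul, ← Submodule.Quotient.mk_smul, Submodule.Quotient.mk_eq_zero,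
      Submodule.mem_comap]
    exact hsN
  · -- Ext part
    intro I ⟨r, hrI, hrnzd⟩
    classical
    haveI : Projective (ModuleCat.of R R) :=
      (IsProjective.iff_projective (R := R) R).mp inferInstance
    set e : ModuleCat.of R R ⟶ ModuleCat.of R (R ⧸ I) := ModuleCat.ofHom I.mkQ with he
    haveI : Epi e := (ModuleCat.epi_iff_surjective e).mpr (Submodule.mkQ_surjective I)
    refine ext_one_subsingleton (resolutionOfEpi e) ?_
    rw [ShortComplex.moduleCat_exact_iff]
    intro f hf
    -- `f` is a morphism `(ofComplex' e).X 1 ⟶ ModuleCat.of R ↥E`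
    have hf' : (ofComplex' e).d 2 1 ≫ f = 0 := hf
    rw [ofComplex'_d_2_1] at hf'
    have hι : Limits.kernel.ι (Projective.d e) ≫ f = 0 := by
      rw [← cancel_epi (Projective.π (Limits.kernel (Projective.d e)))]
      rw [Limits.comp_zero]; exact (Category.assoc _ _ _).symm.trans hf'
    have hker : LinearMap.ker (Projective.d e).hom ≤
        LinearMap.ker (show Projective.syzygies e ⟶ ModuleCat.of R ↥E from f).hom := by
      intro x hx
      have hxd : Projective.d e x = 0 := LinearMap.mem_ker.mp hx
      have hk0 : ModuleCat.ofHom (LinearMap.ker (Projective.d e).hom).subtype ≫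
          Projective.d e = 0 := by
        apply ModuleCat.hom_ext; apply LinearMap.ext; intro y; exact y.2
      have hkf : ModuleCat.ofHom (LinearMap.ker (Projective.d e).hom).subtype ≫ f = 0 := by
        erw [← Limits.kernel.lift_ι (Projective.d e) _ hk0, Category.assoc, hι,
          Limits.comp_zero]
      exact LinearMap.congr_fun (congrArg ModuleCat.Hom.hom hkf) ⟨x, hxd⟩
    have hrrange : r ∈ LinearMap.range (Projective.d e :
        Projective.syzygies e ⟶ ModuleCat.of R R).hom := by
      have hrker : r ∈ LinearMap.ker (I.mkQ) := by
        rw [Submodule.ker_mkQ]; exact hrI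
      have hkr0 : ModuleCat.ofHom (LinearMap.ker I.mkQ).subtype ≫ e = 0 := by
        apply ModuleCat.hom_ext; apply LinearMap.ext; intro y; exact y.2
      have hπ : Function.Surjective (Projective.π (Limits.kernel e)) :=
        (ModuleCat.epi_iff_surjective _).mp inferInstance
      obtain ⟨x, hx⟩ := hπ (Limits.kernel.lift e _ hkr0 ⟨r, hrker⟩)
      refine ⟨x, ?_⟩
      have h2 := LinearMap.congr_fun (congrArg ModuleCat.Hom.hom (Limits.kernel.lift_ι e
        (ModuleCat.ofHom (LinearMap.ker I.mkQ).subtype) hkr0)) ⟨r, hrker⟩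
      calc Projective.d e x = Limits.kernel.ι e (Projective.π (Limits.kernel e) x) := rfl
        _ = Limits.kernel.ι e (Limits.kernel.lift e _ hkr0 ⟨r, hrker⟩) := by rw [hx]
        _ = r := h2
    obtain ⟨g, hg⟩ := key_extend hQ N E hE (Projective.d e).hom
      (show Projective.syzygies e ⟶ ModuleCat.of R ↥E from f).hom hker hrrange hrnzd
    refine ⟨ModuleCat.ofHom g, ?_⟩
    show (ofComplex' e).d 1 0 ≫ ModuleCat.ofHom g = f
    rw [ofComplex'_d_1_0]
    exact ModuleCat.hom_ext hg
end

section
/- Let R be a commutative reduced ring with finitely many minimal primes. If M is an infinitely generated projective R-module and N is an infinitely generated projective submodule of M, then the minimum cardinality of a generating set of N is at most the minimum cardinality of a generating set of M. -/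
universe u

/-- The minimum cardinality of a generating set of an `R`-module `M`. -/
noncomputable def genCard (R : Type u) [CommRing R] (M : Type u)
    [AddCommGroup M] [Module R M] : Cardinal.{u} :=
  sInf {c : Cardinal.{u} | ∃ s : Set M, Cardinal.mk s = c ∧ Submodule.span R s = ⊤}

open Cardinal Submodule TensorProduct

/-- The localization of a reduced ring at a minimal prime is a field. -/
lemma isField_localization_minimal {R : Type u} [CommRing R] [IsReduced R]
    {p : Ideal R} [p.IsPrime] (hmin : p ∈ minimalPrimes R) :
    IsField (Localization p.primeCompl) := by
  haveI : Nontrivial (Localization p.primeCompl) :=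
    IsLocalization.AtPrime.nontrivial _ p
  refine ⟨exists_pair_ne _, mul_comm, ?_⟩
  intro a ha
  have hnil : ¬ IsNilpotent a := by
    intro h
    exact ha (h.eq_zero)
  replace hnil : a ∉ nonunits _ := by
    intro hu
    apply hnil
    have hm : a ∈ IsLocalRing.maximalIdeal (Localization p.primeCompl) :=
      (IsLocalRing.mem_maximalIdeal _).mpr hu
    rw [← IsLocalization.AtPrime.map_eq_maximalIdeal p,
      ← IsLocalization.AtPrime.radical_map_of_mem_minimalPrimes (Localization p.primeCompl) p ⊥ hmin,
      Ideal.map_bot] at hm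
    obtain ⟨n, hn⟩ := hm
    exact ⟨n, by simpa using hn⟩
  have : IsUnit a := by
    by_contra h
    exact hnil (mem_nonunits_iff.mpr h)
  obtain ⟨u, rfl⟩ := this
  exact ⟨(u⁻¹ : _), u.mul_inv⟩

/-- In a finsupp vector space over a field, the supports of all elements of the
range of a linear map are contained in a set of cardinality at most `rank * ℵ₀`. -/
lemma field_support_bound {K : Type u} [Field K] {α : Type u} {V : Type u}
    [AddCommGroup V] [Module K V] (G : V →ₗ[K] (α →₀ K)) :
    ∃ T : Set α, (∀ v : V, ((G v).support : Set α) ⊆ T) ∧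
      #T ≤ Module.rank K V * ℵ₀ := by
  let W := LinearMap.range G
  let b := Module.Basis.ofVectorSpace K ↥W
  let T : Set α := ⋃ i : ↥(Module.Basis.ofVectorSpaceIndex K ↥W),
    (((b i : ↥W) : α →₀ K).support : Set α)
  have hrangeT : W ≤ Finsupp.supported K K T := by
    have hspan2 : Submodule.span K (W.subtype '' Set.range ⇑b) = W := by
      rw [← Submodule.map_span, Module.Basis.span_eq, Submodule.map_subtype_top]
    rw [← hspan2]
    refine Submodule.span_le.mpr ?_
    rintro y ⟨w, ⟨i, rfl⟩, rfl⟩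
    rw [SetLike.mem_coe, Finsupp.mem_supported]
    exact Set.subset_iUnion
      (fun j : ↥(Module.Basis.ofVectorSpaceIndex K ↥W) => (((b j : ↥W) : α →₀ K).support : Set α)) i
  refine ⟨T, ?_, ?_⟩
  · intro v
    exact (Finsupp.mem_supported K (G v)).mp (hrangeT (LinearMap.mem_range_self G v))
  · have hT : #T ≤ #(↥(Module.Basis.ofVectorSpaceIndex K ↥W)) * ℵ₀ := by
      refine le_trans Cardinal.mk_iUnion_le_sum_mk ?_
      refine le_trans (Cardinal.sum_le_sum _ (fun _ => ℵ₀) fun i =>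
        (Set.Finite.lt_aleph0 (Set.finite_mem_finset _)).le) ?_
      rw [Cardinal.sum_const']
    refine hT.trans (mul_le_mul_left ?_ ℵ₀)
    rw [b.mk_eq_rank'']
    exact rank_range_le G

/-- Per-prime bound: the union of the supports of the images in the `K`-valued
finsupp module has cardinality at most `#S`, for `K` a flat `R`-algebra which
is a field. -/
lemma perPrime_bound {R : Type u} [CommRing R]
    {M : Type u} [AddCommGroup M] [Module R M] (S : Set M)
    (hS : Submodule.span R S = ⊤) (hSinf : ℵ₀ ≤ #S)
    (K : Type u) [Field K] [Algebra R K] (hflat : Module.Flat R K)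
    (N : Submodule R M) (σ : ↥N →ₗ[R] (↥N →₀ R)) :
    #(⋃ x : ↥N, ((Finsupp.mapRange.linearMap
        (Algebra.linearMap R K) (σ x)).support : Set ↥N)) ≤ #S := by
  let φ : (↥N →₀ R) →ₗ[R] (↥N →₀ K) := Finsupp.mapRange.linearMap (Algebra.linearMap R K)
  let g : ↥N →ₗ[R] (↥N →₀ K) := φ.comp σ
  let G : K ⊗[R] ↥N →ₗ[K] (↥N →₀ K) := g.liftBaseChange K
  have hinj : Function.Injective (N.subtype.baseChange K) := by
    show Function.Injective ⇑(N.subtype.baseChange K)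
    rw [LinearMap.baseChange_eq_ltensor]
    exact Module.Flat.lTensor_preserves_injective_linearMap N.subtype N.injective_subtype
  have hspanK : Submodule.span K (⇑(TensorProduct.mk R K M 1) '' S) = ⊤ := by
    have h := Submodule.baseChange_span (A := K) (R := R) (M := M) S
    rw [hS, Submodule.baseChange_top] at h
    exact h.symm
  have hrankM : Module.rank K (K ⊗[R] M) ≤ #S := by
    have h1 : Module.rank K (K ⊗[R] M) =
        Module.rank K ↥(Submodule.span K (⇑(TensorProduct.mk R K M 1) '' S)) := by
      rw [hspanK, rank_top]
    rw [h1]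
    exact (rank_span_le _).trans (Cardinal.mk_image_le)
  have hrank : Module.rank K (K ⊗[R] ↥N) ≤ #S :=
    le_trans ((N.subtype.baseChange K).rank_le_of_injective hinj) hrankM
  obtain ⟨T, hT1, hT2⟩ := field_support_bound G
  have hsub : (⋃ x : ↥N, ((Finsupp.mapRange.linearMap
      (Algebra.linearMap R K) (σ x)).support : Set ↥N)) ⊆ T := by
    refine Set.iUnion_subset fun x => ?_
    have hgx : (Finsupp.mapRange.linearMap (Algebra.linearMap R K) (σ x)) = G ((1 : K) ⊗ₜ[R] x) := by
      show g x = g.liftBaseChange K ((1 : K) ⊗ₜ[R] x)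
      rw [LinearMap.liftBaseChange_tmul, one_smul]
    rw [hgx]
    exact hT1 _
  refine le_trans (Cardinal.mk_le_mk_of_subset hsub) (hT2.trans ?_)
  calc Module.rank K (K ⊗[R] ↥N) * ℵ₀ ≤ #S * ℵ₀ := mul_le_mul_left hrank ℵ₀
    _ = #S := Cardinal.mul_eq_left hSinf hSinf Cardinal.aleph0_ne_zero

/-- Key lemma: a projective submodule of a module with an infinite generating
set `S` admits a generating set of cardinality at most `#S`. -/
lemma exists_small_gen (R : Type u) [CommRing R] [IsReduced R]
    (hfin : (minimalPrimes R).Finite)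
    (M : Type u) [AddCommGroup M] [Module R M]
    (N : Submodule R M) (hNproj : Module.Projective R N)
    (S : Set M) (hS : Submodule.span R S = ⊤) (hSinf : ℵ₀ ≤ #S) :
    ∃ s : Set ↥N, Submodule.span R s = ⊤ ∧ #s ≤ #S := by
  obtain ⟨σ, hσ⟩ := (Module.projective_def).mp hNproj
  set B0 : Set ↥N := ⋃ x : ↥N, ((σ x).support : Set ↥N) with hB0
  refine ⟨B0, ?_, ?_⟩
  · -- B0 spans N
    rw [eq_top_iff]
    intro x _
    have hx : Finsupp.linearCombination R (id : ↥N → ↥N) (σ x) = x := hσ x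
    rw [← hx, Finsupp.linearCombination_apply]
    refine Submodule.finsuppSum_mem _ _ _ _ fun b hb => ?_
    refine Submodule.smul_mem _ _ (Submodule.subset_span ?_)
    exact Set.mem_iUnion.mpr ⟨x, by simpa using hb⟩
  · -- cardinality bound
    let P := {q : Ideal R // q ∈ minimalPrimes R}
    haveI : Finite P := hfin
    let F : P → Set ↥N := fun pp =>
      letI : pp.1.IsPrime := pp.2.1.1
      ⋃ x : ↥N, ((Finsupp.mapRange.linearMap
        (Algebra.linearMap R (Localization pp.1.primeCompl)) (σ x)).support : Set ↥N)
    have hsub : B0 ⊆ ⋃ pp : P, F pp := by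
      intro b hb
      rw [hB0, Set.mem_iUnion] at hb
      obtain ⟨x, hx⟩ := hb
      have hr : σ x b ≠ 0 := by
        simpa using hx
      -- find a minimal prime not containing σ x b
      have hnotnil : ¬ IsNilpotent (σ x b) := fun h => hr h.eq_zero
      rw [nilpotent_iff_mem_prime] at hnotnil
      push_neg at hnotnil
      obtain ⟨J, hJ, hrJ⟩ := hnotnil
      haveI := hJ
      obtain ⟨p, hp, hpJ⟩ := Ideal.exists_minimalPrimes_le (bot_le : ⊥ ≤ J)
      have hrp : σ x b ∉ p := fun h => hrJ (hpJ h)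
      haveI : p.IsPrime := hp.1.1
      refine Set.mem_iUnion.mpr ⟨⟨p, hp⟩, ?_⟩
      show b ∈ ⋃ x : ↥N, ((Finsupp.mapRange.linearMap
        (Algebra.linearMap R (Localization p.primeCompl)) (σ x)).support : Set ↥N)
      refine Set.mem_iUnion.mpr ⟨x, ?_⟩
      have hmaps : algebraMap R (Localization p.primeCompl) (σ x b) ≠ 0 := by
        intro h0
        obtain ⟨m, hm⟩ := (IsLocalization.map_eq_zero_iff p.primeCompl
          (Localization p.primeCompl) (σ x b)).mp h0
        rcases ‹p.IsPrime›.mul_mem_iff_mem_or_mem.mp (hm ▸ p.zero_mem) with h | h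
        · exact m.2 h
        · exact hrp h
      simp only [Finset.mem_coe, Finsupp.mem_support_iff]
      simpa [Finsupp.mapRange.linearMap_apply, Finsupp.mapRange_apply] using hmaps
    refine le_trans (Cardinal.mk_le_mk_of_subset hsub) ?_
    have hFle : ∀ pp : P, #(F pp) ≤ #S := by
      rintro ⟨p, hp⟩
      haveI : p.IsPrime := hp.1.1
      letI : Field (Localization p.primeCompl) := (isField_localization_minimal hp).toField
      exact perPrime_bound S hS hSinf (Localization p.primeCompl)
        (IsLocalization.flat _ p.primeCompl) N σ
    refine le_trans Cardinal.mk_iUnion_le_sum_mk ?_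
    refine le_trans (Cardinal.sum_le_sum _ _ hFle) ?_
    rw [Cardinal.sum_const']
    calc #P * #S ≤ #S * #S := by
          exact mul_le_mul_left ((Cardinal.lt_aleph0_of_finite P).le.trans hSinf) _
      _ = #S := Cardinal.mul_eq_self hSinf

/-- Over a reduced commutative ring with finitely many minimal primes, if `M` is an
infinitely generated projective module and `N` is an infinitely generated projective
submodule of `M`, then the minimum cardinality of a generating set of `N` is at most
that of `M`. -/
theorem stmt14 (R : Type u) [CommRing R] [IsReduced R]
    (hfin : (minimalPrimes R).Finite)
    (M : Type u) [AddCommGroup M] [Module R M]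
    (hMproj : Module.Projective R M) (hM : ¬ Module.Finite R M)
    (N : Submodule R M) (hNproj : Module.Projective R N) (hN : ¬ N.FG) :
    genCard R N ≤ genCard R M := by
  have hne : {c : Cardinal.{u} | ∃ s : Set M, Cardinal.mk s = c ∧ Submodule.span R s = ⊤}.Nonempty :=
    ⟨#(Set.univ : Set M), Set.univ, rfl, Submodule.span_univ⟩
  obtain ⟨S, hScard, hSspan⟩ := csInf_mem hne
  have hSinf : ℵ₀ ≤ #S := by
    by_contra h
    push_neg at h
    have hfinS : S.Finite := Cardinal.lt_aleph0_iff_set_finite.mp h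
    apply hM
    rw [Module.finite_def]
    exact ⟨hfinS.toFinset, by rw [Set.Finite.coe_toFinset]; exact hSspan⟩
  obtain ⟨s, hs_span, hs_le⟩ := exists_small_gen R hfin M N hNproj S hSspan hSinf
  have h1 : genCard R N ≤ #s := csInf_le' ⟨s, rfl, hs_span⟩
  exact h1.trans (hs_le.trans_eq hScard)
end

section
/- Let R be a commutative reduced ring with finitely many minimal primes. Then R can be written as a ring direct product R ≅ S × R', where S is a semisimple ring (possibly zero) and R' is a reduced ring with finitely many minimal primes that does not contain a field as a ring direct summand. -/
universe u

section Aux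

variable {A B : Type*} [CommRing A] [CommRing B]

/-- Product of ring equivalences. -/
def ringEquivProdCongr {A B C D : Type*} [CommRing A] [CommRing B] [CommRing C] [CommRing D]
    (e₁ : A ≃+* B) (e₂ : C ≃+* D) : A × C ≃+* B × D :=
  { Equiv.prodCongr e₁.toEquiv e₂.toEquiv with
    map_mul' := fun x y => Prod.ext (map_mul e₁ _ _) (map_mul e₂ _ _)
    map_add' := fun x y => Prod.ext (map_add e₁ _ _) (map_add e₂ _ _) }

/-- Associativity ring equivalence. -/
def ringEquivProdAssoc (A B C : Type*) [CommRing A] [CommRing B] [CommRing C] :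
    (A × B) × C ≃+* A × (B × C) :=
  { Equiv.prodAssoc A B C with
    map_mul' := fun _ _ => rfl
    map_add' := fun _ _ => rfl }

lemma minimalPrimes_comap_ringEquiv {R S : Type*} [CommRing R] [CommRing S] (e : R ≃+* S) :
    minimalPrimes R = Ideal.comap (e : R →+* S) '' minimalPrimes S := by
  have h : (⊥ : Ideal S).comap (e : R →+* S) = ⊥ := by
    rw [← RingHom.ker_eq_comap_bot]
    exact (RingHom.injective_iff_ker_eq_bot _).mp e.injective
  have := Ideal.comap_minimalPrimes_eq_of_surjective (f := (e : R →+* S)) e.surjective ⊥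
  rw [h] at this
  exact this

lemma comap_injOn_ringEquiv {R S : Type*} [CommRing R] [CommRing S] (e : R ≃+* S) :
    Function.Injective (Ideal.comap (e : R →+* S)) := by
  intro p q h
  have : ∀ I : Ideal S, Ideal.map (e : R →+* S) (Ideal.comap (e : R →+* S) I) = I :=
    fun I => Ideal.map_comap_of_surjective _ e.surjective I
  rw [← this p, ← this q, h]

lemma ncard_minimalPrimes_ringEquiv {R S : Type*} [CommRing R] [CommRing S] (e : R ≃+* S) :
    (minimalPrimes R).ncard = (minimalPrimes S).ncard := by
  rw [minimalPrimes_comap_ringEquiv e,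
    Set.ncard_image_of_injective _ (comap_injOn_ringEquiv e)]

lemma finite_minimalPrimes_ringEquiv {R S : Type*} [CommRing R] [CommRing S] (e : R ≃+* S)
    (h : (minimalPrimes R).Finite) : (minimalPrimes S).Finite := by
  have := minimalPrimes_comap_ringEquiv e
  rw [this] at h
  exact h.of_finite_image ((comap_injOn_ringEquiv e).injOn)

lemma snd_surj : Function.Surjective (RingHom.snd A B) := fun b => ⟨(0, b), rfl⟩

lemma ker_snd_le {q : Ideal (A × B)} (h : ((1 : A), (0 : B)) ∈ q) :
    RingHom.ker (RingHom.snd A B) ≤ q := by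
  intro x hx
  have hx2 : x.2 = 0 := hx
  have : x = (x.1, (1 : B)) * ((1 : A), (0 : B)) := by
    ext <;> simp [hx2]
  rw [this]
  exact Ideal.mul_mem_left _ _ h

lemma comap_snd_mem_minimalPrimes {p : Ideal B} (hp : p ∈ minimalPrimes B) :
    p.comap (RingHom.snd A B) ∈ minimalPrimes (A × B) := by
  rw [minimalPrimes_eq_minimals] at hp ⊢
  have hpp : p.IsPrime := hp.1
  refine ⟨Ideal.IsPrime.comap _, fun q hq hle => ?_⟩
  haveI := hq
  -- (0,1) ∉ q
  have h01 : ((0 : A), (1 : B)) ∉ q := by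
    intro h
    have := hle h
    simp only [Ideal.mem_comap, RingHom.coe_snd] at this
    exact hpp.ne_top (Ideal.eq_top_of_isUnit_mem _ this isUnit_one)
  have h10 : ((1 : A), (0 : B)) ∈ q := by
    have hz : (((1 : A), (0 : B)) : A × B) * ((0 : A), (1 : B)) = 0 := by ext <;> simp
    rcases hq.mem_or_mem (by rw [hz]; exact q.zero_mem) with h | h
    · exact h
    · exact absurd h h01
  have hker : RingHom.ker (RingHom.snd A B) ≤ q := ker_snd_le h10
  have hqprime : (q.map (RingHom.snd A B)).IsPrime :=
    Ideal.map_isPrime_of_surjective snd_surj hker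
  have hqle : q.map (RingHom.snd A B) ≤ p := Ideal.map_le_iff_le_comap.mpr hle
  have hple : p ≤ q.map (RingHom.snd A B) := hp.2 hqprime hqle
  have hcomap : (q.map (RingHom.snd A B)).comap (RingHom.snd A B) = q := by
    rw [Ideal.comap_map_of_surjective (RingHom.snd A B) snd_surj, ← RingHom.ker_eq_comap_bot]
    exact sup_eq_left.mpr hker
  calc p.comap (RingHom.snd A B) ≤ (q.map (RingHom.snd A B)).comap (RingHom.snd A B) :=
        Ideal.comap_mono hple
    _ = q := hcomap

lemma ker_fst_mem_minimalPrimes [Nontrivial A] (hA : (⊥ : Ideal A).IsPrime) :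
    (⊥ : Ideal A).comap (RingHom.fst A B) ∈ minimalPrimes (A × B) := by
  rw [minimalPrimes_eq_minimals]
  haveI := hA
  refine ⟨Ideal.IsPrime.comap _, fun q hq hle => ?_⟩
  haveI := hq
  -- (1,0) ∉ q
  have h10 : ((1 : A), (0 : B)) ∉ q := by
    intro h
    have := hle h
    simp only [Ideal.mem_comap, RingHom.coe_fst, Ideal.mem_bot] at this
    exact one_ne_zero this
  have h01 : ((0 : A), (1 : B)) ∈ q := by
    have hz : (((1 : A), (0 : B)) : A × B) * ((0 : A), (1 : B)) = 0 := by ext <;> simp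
    rcases hq.mem_or_mem (by rw [hz]; exact q.zero_mem) with h | h
    · exact absurd h h10
    · exact h
  intro x hx
  have hx1 : x.1 = 0 := by simpa [Ideal.mem_comap] using hx
  have : x = ((1 : A), x.2) * ((0 : A), (1 : B)) := by ext <;> simp [hx1]
  rw [this]
  exact Ideal.mul_mem_left _ _ h01

lemma comap_snd_injective : Function.Injective (Ideal.comap (RingHom.snd A B)) := by
  intro p q h
  have : ∀ I : Ideal B, Ideal.map (RingHom.snd A B) (I.comap (RingHom.snd A B)) = I :=
    fun I => Ideal.map_comap_of_surjective _ snd_surj I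
  rw [← this p, ← this q, h]

lemma isReduced_snd [IsReduced (A × B)] : IsReduced B := by
  constructor
  intro b hb
  obtain ⟨n, hn⟩ := hb
  have hb' : b ^ (n + 1) = 0 := by rw [pow_succ, hn, zero_mul]
  have : IsNilpotent (((0 : A), b) : A × B) := ⟨n + 1, by ext <;> simp [hb']⟩
  have h0 := IsReduced.eq_zero _ this
  exact congrArg Prod.snd h0

lemma minimalPrimes_prod_facts [Nontrivial A] (hA : (⊥ : Ideal A).IsPrime)
    (hfin : (minimalPrimes (A × B)).Finite) :
    (minimalPrimes B).Finite ∧ (minimalPrimes B).ncard < (minimalPrimes (A × B)).ncard := by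
  have hsub : Ideal.comap (RingHom.snd A B) '' minimalPrimes B ⊆ minimalPrimes (A × B) := by
    rintro _ ⟨p, hp, rfl⟩
    exact comap_snd_mem_minimalPrimes hp
  have hBfin : (minimalPrimes B).Finite :=
    (hfin.subset hsub).of_finite_image (comap_snd_injective.injOn)
  refine ⟨hBfin, ?_⟩
  have hnotmem : (⊥ : Ideal A).comap (RingHom.fst A B) ∉
      Ideal.comap (RingHom.snd A B) '' minimalPrimes B := by
    rintro ⟨p, hp, heq⟩
    rw [minimalPrimes_eq_minimals] at hp
    have h01 : ((0 : A), (1 : B)) ∈ (⊥ : Ideal A).comap (RingHom.fst A B) := by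
      simp [Ideal.mem_comap]
    rw [← heq] at h01
    simp only [Ideal.mem_comap, RingHom.coe_snd] at h01
    exact hp.1.ne_top (Ideal.eq_top_of_isUnit_mem _ h01 isUnit_one)
  have hins : insert ((⊥ : Ideal A).comap (RingHom.fst A B))
      (Ideal.comap (RingHom.snd A B) '' minimalPrimes B) ⊆ minimalPrimes (A × B) := by
    rw [Set.insert_subset_iff]
    exact ⟨ker_fst_mem_minimalPrimes hA, hsub⟩
  have himfin : (Ideal.comap (RingHom.snd A B) '' minimalPrimes B).Finite := hfin.subset hsub
  calc (minimalPrimes B).ncard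
      = (Ideal.comap (RingHom.snd A B) '' minimalPrimes B).ncard :=
        (Set.ncard_image_of_injective _ comap_snd_injective).symm
    _ < (insert ((⊥ : Ideal A).comap (RingHom.fst A B))
          (Ideal.comap (RingHom.snd A B) '' minimalPrimes B)).ncard := by
        rw [Set.ncard_insert_of_notMem hnotmem himfin]; omega
    _ ≤ (minimalPrimes (A × B)).ncard := Set.ncard_le_ncard hins hfin

end Aux

set_option maxHeartbeats 2000000 in
lemma stmt17_aux (n : ℕ) : ∀ (R : Type u) (_ : CommRing R) (_ : IsReduced R)
    (hfin : (minimalPrimes R).Finite), (minimalPrimes R).ncard = n →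
    ∃ (S R' : Type u), ∃ (_ : CommRing S) (_ : CommRing R'),
      IsSemisimpleRing S ∧ IsReduced R' ∧ (minimalPrimes R').Finite ∧
        ¬ ContainsFieldSummand R' ∧ Nonempty (R ≃+* S × R') := by
  induction n using Nat.strong_induction_on with
  | _ n ih =>
    intro R _ _ hfin hcard
    by_cases h : ContainsFieldSummand R
    · obtain ⟨K, T, _, _, hK, ⟨e⟩⟩ := h
      haveI : Nontrivial K := ⟨hK.exists_pair_ne⟩
      have hKTfin : (minimalPrimes (K × T)).Finite := finite_minimalPrimes_ringEquiv e hfin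
      have hbot : (⊥ : Ideal K).IsPrime := by letI := hK.toField; exact Ideal.bot_prime
      obtain ⟨hTfin, hTlt⟩ := minimalPrimes_prod_facts (A := K) (B := T) hbot hKTfin
      have hncard : (minimalPrimes R).ncard = (minimalPrimes (K × T)).ncard :=
        ncard_minimalPrimes_ringEquiv e
      have hlt : (minimalPrimes T).ncard < n := by omega
      haveI : IsReduced (K × T) := by
        constructor
        intro x hx
        obtain ⟨m, hm⟩ := hx
        have : IsNilpotent (e.symm x) := ⟨m, by rw [← map_pow, hm, map_zero]⟩
        have h0 := IsReduced.eq_zero _ this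
        have := congrArg e h0
        simpa using this
      haveI : IsReduced T := isReduced_snd (A := K)
      obtain ⟨S₀, R', _, _, hS₀, hred, hfin', hns, ⟨e₀⟩⟩ :=
        ih ((minimalPrimes T).ncard) hlt T inferInstance inferInstance hTfin rfl
      haveI hKss : IsSemisimpleRing K := by letI := hK.toField; infer_instance
      refine ⟨K × S₀, R', inferInstance, inferInstance, ?_, hred, hfin', hns, ⟨?_⟩⟩
      · infer_instance
      · exact e.trans ((ringEquivProdCongr (RingEquiv.refl K) e₀).trans
          (ringEquivProdAssoc K S₀ R').symm)
    · refine ⟨PUnit, R, inferInstance, inferInstance, ?_, inferInstance, hfin, h, ⟨?_⟩⟩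
      · exact { toComplementedLattice := ⟨fun _ => ⟨⊥, disjoint_bot_right, by rw [codisjoint_iff]; exact Subsingleton.elim _ _⟩⟩ }
      · exact { (Equiv.punitProd R).symm with
          map_mul' := fun _ _ => rfl
          map_add' := fun _ _ => rfl }

set_option maxHeartbeats 2000000 in
/-- Every reduced commutative ring with finitely many minimal primes decomposes as a
ring direct product `S × R'` with `S` semisimple and `R'` reduced with finitely many
minimal primes and containing no field as a ring direct summand. -/
theorem stmt17 (R : Type u) [CommRing R] [IsReduced R]
    (hfin : (minimalPrimes R).Finite) :
    ∃ (S R' : Type u), ∃ (_ : CommRing S) (_ : CommRing R'),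
      IsSemisimpleRing S ∧ IsReduced R' ∧ (minimalPrimes R').Finite ∧
        ¬ ContainsFieldSummand R' ∧ Nonempty (R ≃+* S × R') :=
  stmt17_aux (minimalPrimes R).ncard R inferInstance inferInstance hfin rfl
end
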